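/- arXiv:2407.12439 — 6 statements merged into one kernel-verified Lean document; each statement's English description precedes it below -/
import Mathlib

section
/- Let n ≥ 1 be an integer and β ∈ [0, n). Then there exists a constant C depending only on n and β (in particular independent of Ω) such that for every open convex set Ω ⊂ ℝ^{n+1} and every ℋ^n-measurable subset E of ∂Ω: ∫_E |x|^{−β} dℋ^n(x) ≤ C · (ℋ^n(E))^{(n−β)/n}. -/
open MeasureTheory Metric
open scoped ENNReal NNReal RealInnerProductSpace

section AuxProjection

variable {F : Type*} [NormedAddCommGroup F] [InnerProductSpace ℝ F] [CompleteSpace F]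

lemma varineq_unique' {K : Set F} {y a b : F} (ha : a ∈ K) (hb : b ∈ K)
    (hA : ∀ z ∈ K, ⟪y - a, z - a⟫ ≤ 0) (hB : ∀ z ∈ K, ⟪y - b, z - b⟫ ≤ 0) : a = b := by
  have h1 := hA b hb
  have h2 := hB a ha
  have e2 : (y - a) - (y - b) = b - a := by abel
  have e3 : ⟪(y - a) - (y - b), b - a⟫ = ⟪y - a, b - a⟫ - ⟪y - b, b - a⟫ :=
    inner_sub_left _ _ _
  have e5 : ⟪y - b, a - b⟫ = - ⟪y - b, b - a⟫ := by
    rw [show (a - b : F) = -(b - a) by abel, inner_neg_right]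
  have e6 : ⟪b - a, b - a⟫ = ‖b - a‖ ^ 2 := real_inner_self_eq_norm_sq _
  rw [e2, e6] at e3
  have hn : ‖b - a‖ = 0 := by nlinarith [norm_nonneg (b - a)]
  have hba : b - a = 0 := norm_eq_zero.1 hn
  exact (sub_eq_zero.1 hba).symm

lemma exists_lipschitz_projection' {K : Set F} (hne : K.Nonempty) (hK : Convex ℝ K)
    (hc : IsClosed K) :
    ∃ P : F → F, LipschitzWith 1 P ∧ ∀ y, P y ∈ K ∧ ∀ z ∈ K, ⟪y - P y, z - P y⟫ ≤ 0 := by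
  have hex : ∀ u : F, ∃ v, v ∈ K ∧ ∀ z ∈ K, ⟪u - v, z - v⟫ ≤ 0 := by
    intro u
    obtain ⟨v, hv, hmin⟩ := exists_norm_eq_iInf_of_complete_convex hne hc.isComplete hK u
    exact ⟨v, hv, (norm_eq_iInf_iff_real_inner_le_zero hK hv).1 hmin⟩
  choose P hPmem hPvar using hex
  refine ⟨P, ?_, fun y => ⟨hPmem y, hPvar y⟩⟩
  refine LipschitzWith.of_dist_le_mul fun y₁ y₂ => ?_
  have h1 := hPvar y₁ (P y₂) (hPmem y₂)
  have h2 := hPvar y₂ (P y₁) (hPmem y₁)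
  set a := P y₁
  set b := P y₂
  have e2 : (y₁ - y₂) - (a - b) = (y₁ - a) - (y₂ - b) := by abel
  have e3 : ⟪(y₁ - y₂) - (a - b), a - b⟫ = ⟪y₁ - y₂, a - b⟫ - ⟪a - b, a - b⟫ :=
    inner_sub_left _ _ _
  have e4 : ⟪(y₁ - a) - (y₂ - b), a - b⟫ = ⟪y₁ - a, a - b⟫ - ⟪y₂ - b, a - b⟫ :=
    inner_sub_left _ _ _
  have e5 : ⟪y₁ - a, a - b⟫ = - ⟪y₁ - a, b - a⟫ := by
    rw [show (a - b : F) = -(b - a) by abel, inner_neg_right]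
  have e6 : ⟪a - b, a - b⟫ = ‖a - b‖ ^ 2 := real_inner_self_eq_norm_sq _
  have key : ‖a - b‖ ^ 2 ≤ ⟪y₁ - y₂, a - b⟫ := by rw [e2] at e3; linarith
  have key2 : ⟪y₁ - y₂, a - b⟫ ≤ ‖y₁ - y₂‖ * ‖a - b‖ := real_inner_le_norm _ _
  rw [dist_eq_norm, dist_eq_norm, NNReal.coe_one, one_mul]
  nlinarith [norm_nonneg (a - b), norm_nonneg (y₁ - y₂)]

end AuxProjection



lemma abs_coord_le' {m : ℕ} (x : EuclideanSpace ℝ (Fin m)) (i : Fin m) : |x i| ≤ ‖x‖ := by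
  rw [EuclideanSpace.norm_eq]
  have h1 : |x i| = Real.sqrt (‖x i‖ ^ 2) := by
    rw [Real.sqrt_sq_eq_abs, Real.norm_eq_abs, abs_abs]
  rw [h1]
  apply Real.sqrt_le_sqrt
  exact Finset.single_le_sum (f := fun j => ‖x j‖ ^ 2) (fun j _ => sq_nonneg _)
    (Finset.mem_univ i)

noncomputable def insMap {m : ℕ} (i : Fin (m + 1)) (c : ℝ) :
    (Fin m → ℝ) → EuclideanSpace ℝ (Fin (m + 1)) :=
  fun a => (WithLp.equiv 2 (Fin (m+1) → ℝ)).symm (Fin.insertNth i c a)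

lemma insMap_apply {m : ℕ} (i : Fin (m + 1)) (c : ℝ) (a : Fin m → ℝ) (j : Fin (m+1)) :
    insMap i c a j = (Fin.insertNth i c a : Fin (m+1) → ℝ) j := rfl

lemma lipschitz_insertNth' {m : ℕ} (i : Fin (m + 1)) (c : ℝ) :
    LipschitzWith (NNReal.sqrt m) (insMap i c) := by
  refine LipschitzWith.of_dist_le_mul fun a b => ?_
  have hsum : ∑ j : Fin (m+1), dist (insMap i c a j) (insMap i c b j) ^ 2
      ≤ m * dist a b ^ 2 := by
    simp only [insMap_apply]
    rw [Fin.sum_univ_succAbove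
      (fun j => dist ((Fin.insertNth i c a : Fin (m+1) → ℝ) j)
        ((Fin.insertNth i c b : Fin (m+1) → ℝ) j) ^ 2) i]
    simp only [Fin.insertNth_apply_same, Fin.insertNth_apply_succAbove, dist_self]
    calc (0:ℝ) ^ 2 + ∑ k : Fin m, dist (a k) (b k) ^ 2
        ≤ 0 + ∑ _k : Fin m, dist a b ^ 2 := by
          gcongr with k hk'
          · norm_num
          · exact dist_le_pi_dist a b k
      _ = m * dist a b ^ 2 := by simp [Finset.sum_const, mul_comm]
  calc dist (insMap i c a) (insMap i c b)
      = Real.sqrt (∑ j : Fin (m+1), dist (insMap i c a j) (insMap i c b j) ^ 2) :=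
        EuclideanSpace.dist_eq _ _
    _ ≤ Real.sqrt (m * dist a b ^ 2) := Real.sqrt_le_sqrt hsum
    _ = Real.sqrt m * dist a b := by
        rw [Real.sqrt_mul (by positivity), Real.sqrt_sq dist_nonneg]
    _ = (NNReal.sqrt m : ℝ) * dist a b := by rw [Real.coe_sqrt]; norm_num


lemma face_measure' {m : ℕ} (i : Fin (m + 1)) (c R : ℝ) :
    μH[(m:ℝ)] {y : EuclideanSpace ℝ (Fin (m+1)) | y i = c ∧ ∀ j, |y j| ≤ R}
      ≤ (NNReal.sqrt m : ℝ≥0∞) ^ (m:ℝ) * (ENNReal.ofReal (2*R)) ^ m := by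
  set Q : Set (Fin m → ℝ) := Set.univ.pi fun _ => Set.Icc (-R) R with hQ
  have hsub : {y : EuclideanSpace ℝ (Fin (m+1)) | y i = c ∧ ∀ j, |y j| ≤ R}
      ⊆ insMap i c '' Q := by
    rintro y ⟨hyc, hyb⟩
    refine ⟨Fin.removeNth i y, ?_, ?_⟩
    · intro j _
      exact abs_le.1 (hyb (i.succAbove j))
    · show (WithLp.equiv 2 (Fin (m+1) → ℝ)).symm _ = y
      rw [← hyc, Fin.insertNth_self_removeNth]
      rfl
  refine le_trans (measure_mono hsub) ?_
  refine le_trans ((lipschitz_insertNth' i c).hausdorffMeasure_image_le (by positivity) Q) ?_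
  gcongr
  have hpi : (μH[(m:ℝ)] : Measure (Fin m → ℝ)) = volume := by
    have := MeasureTheory.hausdorffMeasure_pi_real (ι := Fin m)
    simpa using this
  rw [hpi, volume_pi_pi]
  simp only [Real.volume_Icc]
  rw [Finset.prod_const]
  have : R - (-R) = 2 * R := by ring
  rw [this]
  simp

lemma frontier_bound' (n : ℕ) (Ω : Set (EuclideanSpace ℝ (Fin (n+1)))) (hΩo : IsOpen Ω)
    (hΩc : Convex ℝ Ω) {r : ℝ} (hr : 0 < r) :
    μH[(n:ℝ)] (frontier Ω ∩ closedBall 0 r)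
      ≤ (2*(n+1) : ℝ≥0∞) * ((NNReal.sqrt n : ℝ≥0∞) ^ (n:ℝ) * (ENNReal.ofReal (6*r)) ^ n) := by
  set A := frontier Ω ∩ closedBall (0 : EuclideanSpace ℝ (Fin (n+1))) r with hA
  rcases Set.eq_empty_or_nonempty A with h | ⟨x₀, hx₀⟩
  · rw [h]; simp
  obtain ⟨hx₀f, hx₀b⟩ := hx₀
  have hx₀c : x₀ ∈ closure Ω := frontier_subset_closure hx₀f
  obtain ⟨z₀, hz₀Ω, hz₀d⟩ := Metric.mem_closure_iff.1 hx₀c r hr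
  set K := Ω ∩ ball (0 : EuclideanSpace ℝ (Fin (n+1))) (2*r) with hK
  have hKopen : IsOpen K := hΩo.inter isOpen_ball
  have hKconv : Convex ℝ K := hΩc.inter (convex_ball _ _)
  have hz₀K : z₀ ∈ K := by
    refine ⟨hz₀Ω, ?_⟩
    rw [mem_ball_zero_iff]
    have h1 : dist x₀ 0 ≤ r := mem_closedBall.1 hx₀b
    calc ‖z₀‖ = dist z₀ 0 := (dist_zero_right _).symm
      _ ≤ dist z₀ x₀ + dist x₀ 0 := dist_triangle _ _ _
      _ < r + r := by rw [dist_comm]; exact add_lt_add_of_lt_of_le hz₀d h1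
      _ = 2*r := by ring
  obtain ⟨P, hPlip, hP⟩ := exists_lipschitz_projection' (K := closure K)
    ⟨z₀, subset_closure hz₀K⟩ hKconv.closure isClosed_closure
  set S : Set (EuclideanSpace ℝ (Fin (n+1))) :=
    {y | (∀ j, |y j| ≤ 3*r) ∧ ∃ j, |y j| = 3*r} with hS
  have hsub : A ⊆ P '' S := by
    rintro x ⟨hxf, hxb⟩
    have hxnorm : ‖x‖ ≤ r := mem_closedBall_zero_iff.1 hxb
    have hxΩ : x ∉ Ω := fun h => ((hΩo.frontier_eq ▸ hxf).2) h
    have hxK : x ∉ K := fun h => hxΩ h.1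
    have hxL : x ∈ closure K := by
      have h2 : x ∈ ball (0 : EuclideanSpace ℝ (Fin (n+1))) (2*r) := by
        rw [mem_ball_zero_iff]; linarith
      have h4 := isOpen_ball.inter_closure ⟨h2, frontier_subset_closure hxf⟩
      rwa [Set.inter_comm] at h4
    obtain ⟨f, hf⟩ := geometric_hahn_banach_open_point hKconv hKopen hxK
    set v := (InnerProductSpace.toDual ℝ (EuclideanSpace ℝ (Fin (n+1)))).symm f with hv
    have hvf : ∀ w, ⟪v, w⟫ = f w := fun w => InnerProductSpace.toDual_symm_apply
    have hfz : f z₀ < f x := hf z₀ hz₀K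
    have hvne : v ≠ 0 := by
      intro h0
      have h5 := hvf (x - z₀)
      rw [h0, inner_zero_left, map_sub] at h5
      linarith
    have hfL : ∀ z ∈ closure K, f z ≤ f x := by
      intro z hz
      exact closure_minimal (fun a ha => (hf a ha).le)
        (IsClosed.preimage f.continuous isClosed_Iic) hz
    set T := PiLp.continuousLinearEquiv 2 ℝ (fun _ : Fin (n+1) => ℝ) with hT
    set N : EuclideanSpace ℝ (Fin (n+1)) → ℝ := fun y => ‖T y‖ with hN
    have hTapp : ∀ (y : EuclideanSpace ℝ (Fin (n+1))) (j : Fin (n+1)), T y j = y j :=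
      fun y j => rfl
    have hNcoord : ∀ (y : EuclideanSpace ℝ (Fin (n+1))) (j : Fin (n+1)), |y j| ≤ N y := by
      intro y j
      have := norm_le_pi_norm (T y) j
      simpa [Real.norm_eq_abs, hTapp] using this
    have hNle : ∀ y : EuclideanSpace ℝ (Fin (n+1)), N y ≤ ‖y‖ := by
      intro y
      refine (pi_norm_le_iff_of_nonneg (norm_nonneg y)).2 fun j => ?_
      rw [hTapp]
      simpa [Real.norm_eq_abs] using abs_coord_le' y j
    have hNv : 0 < N v := by
      rw [hN]
      simp only [norm_pos_iff]
      intro h0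
      exact hvne (by simpa using congrArg T.symm h0)
    set g : ℝ → ℝ := fun s => N (x + s • v) with hg
    have hgcont : Continuous g := by
      apply Continuous.norm
      exact T.continuous.comp (continuous_const.add (continuous_id.smul continuous_const))
    set s₁ := (3*r + N x) / N v with hs₁
    have hNx0 : 0 ≤ N x := norm_nonneg _
    have hs₁0 : 0 ≤ s₁ := div_nonneg (by linarith) hNv.le
    have hgs₁ : 3*r ≤ g s₁ := by
      set X : Fin (n+1) → ℝ := T x with hX
      set V : Fin (n+1) → ℝ := T v with hV
      have h6 : ‖s₁ • V‖ ≤ ‖X + s₁ • V‖ + ‖X‖ := by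
        simpa using norm_sub_le (X + s₁ • V) X
      have h7 : ‖s₁ • V‖ = s₁ * N v := by
        rw [norm_smul, Real.norm_eq_abs, abs_of_nonneg hs₁0]
      have h8 : s₁ * N v = 3*r + N x := div_mul_cancel₀ _ hNv.ne'
      have h9 : g s₁ = ‖X + s₁ • V‖ := by
        have he : T (x + s₁ • v) = X + s₁ • V := by
          rw [map_add, _root_.map_smul]
        show ‖T (x + s₁ • v)‖ = _
        rw [he]
      rw [h9]
      have hNX : ‖X‖ = N x := rfl
      linarith
    have hg0 : g 0 ≤ 3*r := by
      have : g 0 = N x := by simp [hg]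
      rw [this]
      have := hNle x
      linarith
    obtain ⟨s, hsmem, hgs⟩ := intermediate_value_Icc hs₁0 hgcont.continuousOn ⟨hg0, hgs₁⟩
    set y := x + s • v with hy
    have hNy : N y = 3*r := hgs
    have hyS : y ∈ S := by
      constructor
      · intro j
        calc |y j| ≤ N y := hNcoord y j
          _ = 3*r := hNy
      · obtain ⟨j, _, hj⟩ := Finset.exists_mem_eq_sup Finset.univ Finset.univ_nonempty
          (fun j => ‖T y j‖₊)
        refine ⟨j, ?_⟩
        have h10 : ‖T y‖₊ = ‖T y j‖₊ := by rw [Pi.nnnorm_def]; exact hj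
        have h11 : N y = ‖T y j‖ := congrArg NNReal.toReal h10
        rw [hTapp] at h11
        rw [← Real.norm_eq_abs, ← h11, hNy]
    have hxvar : ∀ z ∈ closure K, ⟪y - x, z - x⟫ ≤ 0 := by
      intro z hz
      have h12 : y - x = s • v := by rw [hy]; abel
      rw [h12, real_inner_smul_left]
      have h13 : ⟪v, z - x⟫ = f z - f x := by rw [inner_sub_right, hvf, hvf]
      rw [h13]
      exact mul_nonpos_of_nonneg_of_nonpos hsmem.1 (by linarith [hfL z hz])
    exact ⟨y, hyS, varineq_unique' (hP y).1 hxL (hP y).2 hxvar⟩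
  have hfaces : S ⊆ ⋃ (j : Fin (n+1)), ⋃ (ε : Bool),
      {y : EuclideanSpace ℝ (Fin (n+1)) | y j = (if ε then 3*r else -(3*r)) ∧ ∀ k, |y k| ≤ 3*r} := by
    rintro y ⟨hyb, j, hj⟩
    rcases (abs_eq (by positivity : (0:ℝ) ≤ 3*r)).1 hj with h | h
    · exact Set.mem_iUnion.2 ⟨j, Set.mem_iUnion.2 ⟨true, by simp only [if_true]; exact ⟨h, hyb⟩⟩⟩
    · exact Set.mem_iUnion.2 ⟨j, Set.mem_iUnion.2 ⟨false, by simp only [if_false]; exact ⟨h, hyb⟩⟩⟩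
  set FB := (NNReal.sqrt n : ℝ≥0∞) ^ (n:ℝ) * (ENNReal.ofReal (6*r)) ^ n with hFB
  calc μH[(n:ℝ)] A ≤ μH[(n:ℝ)] (P '' S) := measure_mono hsub
    _ ≤ (1:ℝ≥0∞)^(n:ℝ) * μH[(n:ℝ)] S := hPlip.hausdorffMeasure_image_le (by positivity) S
    _ = μH[(n:ℝ)] S := by simp
    _ ≤ ∑' (j : Fin (n+1)), ∑' (ε : Bool), μH[(n:ℝ)]
        {y : EuclideanSpace ℝ (Fin (n+1)) | y j = (if ε then 3*r else -(3*r)) ∧ ∀ k, |y k| ≤ 3*r} :=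
      le_trans (measure_mono hfaces)
        (le_trans (measure_iUnion_le _) (ENNReal.tsum_le_tsum fun j => measure_iUnion_le _))
    _ ≤ ∑' (_j : Fin (n+1)), ∑' (_ε : Bool), FB := by
      refine ENNReal.tsum_le_tsum fun j => ENNReal.tsum_le_tsum fun ε => ?_
      have := face_measure' j (if ε then 3*r else -(3*r)) (3*r)
      rw [hFB]
      convert this using 4
      ring
    _ = (2*(n+1) : ℝ≥0∞) * FB := by
      rw [tsum_fintype, tsum_fintype]
      simp [Finset.sum_const, Finset.card_univ]
      ring

/-- A universal weighted-perimeter bound on boundaries of convex sets: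
`∫_E |x|^{-β} dℋ^n ≤ C |E|^{(n-β)/n}` for every measurable `E ⊆ ∂Ω`. -/
theorem weighted_measure_bound_on_convex_boundaries
    (n : ℕ) (hn : 1 ≤ n) (β : ℝ) (hβ : β ∈ Set.Ico (0:ℝ) n) :
    ∃ C : ℝ≥0, ∀ (Ω : Set (EuclideanSpace ℝ (Fin (n+1)))), IsOpen Ω → Convex ℝ Ω →
      ∀ E : Set (EuclideanSpace ℝ (Fin (n+1))), E ⊆ frontier Ω → MeasurableSet E →
        (∫⁻ x in E, (‖x‖₊ : ℝ≥0∞) ^ (-β) ∂μH[(n:ℝ)])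
          ≤ (C : ℝ≥0∞) * (μH[(n:ℝ)] E) ^ (((n:ℝ) - β)/(n:ℝ)) := by
  obtain ⟨hβ0, hβn⟩ := hβ
  have hn1 : (1:ℝ) ≤ n := by exact_mod_cast hn
  have hnR : (0:ℝ) < n := by linarith
  have h2z : ∀ a : ℝ, (2:ℝ≥0∞) ^ a ≠ 0 :=
    fun a => (ENNReal.rpow_pos (by norm_num) ENNReal.ofNat_ne_top).ne'
  have h2t : ∀ a : ℝ, (2:ℝ≥0∞) ^ a ≠ ⊤ := by
    intro a
    intro hc
    have h1 : ((2:ℝ≥0∞) ^ a) * ((2:ℝ≥0∞) ^ (-a)) = 1 := by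
      rw [← ENNReal.rpow_add _ _ (by norm_num) ENNReal.ofNat_ne_top]
      simp
    rw [hc, ENNReal.top_mul (h2z (-a))] at h1
    exact ENNReal.top_ne_one h1
  set cg : ℝ≥0∞ := (2*(n+1) : ℝ≥0∞) * ((NNReal.sqrt n : ℝ≥0∞) ^ (n:ℝ) * 6^n) with hcg
  have hcgt : cg ≠ ⊤ := by
    rw [hcg]
    refine ENNReal.mul_ne_top (ENNReal.mul_ne_top ENNReal.ofNat_ne_top ?_)
      (ENNReal.mul_ne_top (ENNReal.rpow_ne_top_of_nonneg (by positivity) ENNReal.coe_ne_top) ?_)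
    · exact_mod_cast ENNReal.natCast_ne_top (n+1)
    · exact ENNReal.pow_ne_top (by norm_num)
  have hgeo : ∀ (Ω : Set (EuclideanSpace ℝ (Fin (n+1)))), IsOpen Ω → Convex ℝ Ω →
      ∀ r : ℝ, 0 < r →
        μH[(n:ℝ)] (frontier Ω ∩ closedBall 0 r) ≤ cg * (ENNReal.ofReal r) ^ ((n:ℕ):ℝ) := by
    intro Ω ho hc r hr
    refine le_trans (frontier_bound' n Ω ho hc hr) ?_
    have h6 : ENNReal.ofReal (6*r) = 6 * ENNReal.ofReal r := by
      rw [ENNReal.ofReal_mul (by norm_num)]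
      norm_num
    rw [h6, mul_pow, hcg, ENNReal.rpow_natCast (ENNReal.ofReal r) n]
    exact le_of_eq (by ring)
  set q : ℝ≥0∞ := (2:ℝ≥0∞) ^ (β - (n:ℝ)) with hq
  have hq1 : q < 1 := ENNReal.rpow_lt_one_of_one_lt_of_neg (by norm_num) (by linarith)
  have hqne : (1:ℝ≥0∞) - q ≠ 0 := fun h => absurd (tsub_eq_zero_iff_le.1 h) (not_le.2 hq1)
  have hqinv : ((1:ℝ≥0∞) - q)⁻¹ ≠ ⊤ := ENNReal.inv_ne_top.2 hqne
  set D : ℝ≥0∞ := cg * 2 ^ β * (1 - q)⁻¹ + 1 with hD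
  have hDne : D ≠ ⊤ := by
    rw [hD]
    exact ENNReal.add_ne_top.2
      ⟨ENNReal.mul_ne_top (ENNReal.mul_ne_top hcgt (h2t β)) hqinv, ENNReal.one_ne_top⟩
  have hD1 : (1:ℝ≥0∞) ≤ D := by rw [hD]; exact le_add_self
  have hDne0 : D ≠ 0 := (zero_lt_one.trans_le hD1).ne'
  refine ⟨D.toNNReal, ?_⟩
  intro Ω hΩo hΩc E hE hEm
  have hDcoe : (D.toNNReal : ℝ≥0∞) = D := ENNReal.coe_toNNReal hDne
  rw [hDcoe]
  set m : ℝ≥0∞ := μH[(n:ℝ)] E with hm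
  rcases eq_or_ne m 0 with hm0 | hm0
  · have hre : (μH[(n:ℝ)] : Measure (EuclideanSpace ℝ (Fin (n+1)))).restrict E = 0 :=
      Measure.restrict_eq_zero.2 hm0
    rw [hre]
    simp
  rcases eq_or_ne m ⊤ with hmtop | hmtop
  · have hp : (0:ℝ) < ((n:ℝ) - β)/n := div_pos (by linarith) hnR
    rw [hmtop, ENNReal.top_rpow_of_pos hp, ENNReal.mul_top hDne0]
    exact le_top
  -- main case
  have hm' : 0 < m.toReal := ENNReal.toReal_pos hm0 hmtop
  set ρ : ℝ := m.toReal ^ ((n:ℝ)⁻¹) with hρ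
  have hρ0 : 0 < ρ := Real.rpow_pos_of_pos hm' _
  set P : ℝ≥0∞ := ENNReal.ofReal ρ with hP
  have hP0 : P ≠ 0 := (ENNReal.ofReal_pos.2 hρ0).ne'
  have hPt : P ≠ ⊤ := ENNReal.ofReal_ne_top
  have hPn : P ^ (n:ℝ) = m := by
    rw [hP, ENNReal.ofReal_rpow_of_pos hρ0, hρ, ← Real.rpow_mul hm'.le,
      inv_mul_cancel₀ hnR.ne', Real.rpow_one, ENNReal.ofReal_toReal hmtop]
  set G : ℝ≥0∞ := P ^ ((n:ℝ) - β) with hG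
  have hGm : G = m ^ (((n:ℝ) - β)/(n:ℝ)) := by
    rw [hG, ← hPn, ← ENNReal.rpow_mul]
    congr 1
    field_simp
  -- radii and annuli
  set rr : ℕ → ℝ := fun j => ρ / 2^j with hrr
  have hrrpos : ∀ j, 0 < rr j := fun j => div_pos hρ0 (by positivity)
  have hofr : ∀ j : ℕ, ENNReal.ofReal (rr j) = P * 2 ^ (-(j:ℝ)) := by
    intro j
    rw [hrr]
    show ENNReal.ofReal (ρ / 2^j) = _
    rw [ENNReal.ofReal_div_of_pos (by positivity), ENNReal.ofReal_pow (by norm_num),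
      ENNReal.ofReal_ofNat, ENNReal.rpow_neg, ENNReal.rpow_natCast, div_eq_mul_inv]
  set A : ℕ → Set (EuclideanSpace ℝ (Fin (n+1))) :=
    fun j => E ∩ (closedBall 0 (rr j) \ closedBall 0 (rr (j+1))) with hAnn
  have hAm : ∀ j, MeasurableSet (A j) :=
    fun j => hEm.inter (measurableSet_closedBall.diff measurableSet_closedBall)
  set φ : EuclideanSpace ℝ (Fin (n+1)) → ℝ≥0∞ := fun x => (‖x‖₊ : ℝ≥0∞) ^ (-β) with hφ
  have hmono : ∀ (a : ℝ) (x : EuclideanSpace ℝ (Fin (n+1))), a ≤ ‖x‖ →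
      φ x ≤ (ENNReal.ofReal a) ^ (-β) := by
    intro a x hax
    rw [hφ]
    show (‖x‖₊ : ℝ≥0∞) ^ (-β) ≤ _
    rw [ENNReal.rpow_neg, ENNReal.rpow_neg]
    refine ENNReal.inv_le_inv.2 (ENNReal.rpow_le_rpow ?_ hβ0)
    rw [← ENNReal.ofReal_coe_nnreal, coe_nnnorm]
    exact ENNReal.ofReal_le_ofReal hax
  set cB := closedBall (0 : EuclideanSpace ℝ (Fin (n+1))) ρ with hcB
  -- splitting
  have step1 : (∫⁻ x in E, φ x ∂μH[(n:ℝ)]) ≤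
      (∫⁻ x in E ∩ cB, φ x ∂μH[(n:ℝ)]) + ∫⁻ x in E \ cB, φ x ∂μH[(n:ℝ)] := by
    have he : E = (E ∩ cB) ∪ (E \ cB) := (Set.inter_union_diff E cB).symm
    calc (∫⁻ x in E, φ x ∂μH[(n:ℝ)])
        = ∫⁻ x in (E ∩ cB) ∪ (E \ cB), φ x ∂μH[(n:ℝ)] := by rw [← he]
      _ ≤ _ := by
          refine le_trans (lintegral_mono' (Measure.restrict_union_le _ _) le_rfl) ?_
          rw [lintegral_add_measure]
  have hfar : (∫⁻ x in E \ cB, φ x ∂μH[(n:ℝ)]) ≤ P ^ (-β) * m := by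
    calc (∫⁻ x in E \ cB, φ x ∂μH[(n:ℝ)])
        ≤ ∫⁻ _x in E \ cB, P ^ (-β) ∂μH[(n:ℝ)] := by
          refine setLIntegral_mono' (hEm.diff measurableSet_closedBall) fun x hx => ?_
          exact hmono ρ x
            (le_of_lt (lt_of_not_ge fun hcon => hx.2 (mem_closedBall_zero_iff.2 hcon)))
      _ = P ^ (-β) * μH[(n:ℝ)] (E \ cB) := setLIntegral_const _ _
      _ ≤ P ^ (-β) * m := mul_le_mul_right (measure_mono Set.diff_subset) _
  have hzero : (∫⁻ x in ({0} : Set (EuclideanSpace ℝ (Fin (n+1)))), φ x ∂μH[(n:ℝ)]) = 0 := by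
    haveI : NullSingletonClass (μH[(n:ℝ)] : Measure (EuclideanSpace ℝ (Fin (n+1)))) :=
      MeasureTheory.Measure.noAtoms_hausdorff _ hnR
    exact setLIntegral_measure_zero _ _ (measure_singleton 0)
  have hnear0 : (∫⁻ x in E ∩ cB, φ x ∂μH[(n:ℝ)]) ≤
      ∫⁻ x in (E ∩ cB) \ {0}, φ x ∂μH[(n:ℝ)] := by
    have hsub : E ∩ cB ⊆ ((E ∩ cB) \ {0}) ∪ {0} := by
      intro x hx
      by_cases h : x = (0 : EuclideanSpace ℝ (Fin (n+1)))
      · exact Or.inr h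
      · exact Or.inl ⟨hx, h⟩
    calc (∫⁻ x in E ∩ cB, φ x ∂μH[(n:ℝ)])
        ≤ ∫⁻ x in ((E ∩ cB) \ {0}) ∪ {0}, φ x ∂μH[(n:ℝ)] :=
          lintegral_mono' (Measure.restrict_mono hsub le_rfl) le_rfl
      _ ≤ (∫⁻ x in (E ∩ cB) \ {0}, φ x ∂μH[(n:ℝ)]) +
            ∫⁻ x in ({0} : Set (EuclideanSpace ℝ (Fin (n+1)))), φ x ∂μH[(n:ℝ)] := by
          refine le_trans (lintegral_mono' (Measure.restrict_union_le _ _) le_rfl) ?_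
          rw [lintegral_add_measure]
      _ = ∫⁻ x in (E ∩ cB) \ {0}, φ x ∂μH[(n:ℝ)] := by rw [hzero, add_zero]
  have hcover : (E ∩ cB) \ {0} ⊆ ⋃ j, A j := by
    rintro x ⟨⟨hxE, hxB⟩, hx0⟩
    have hx0' : 0 < ‖x‖ := norm_pos_iff.2 (by simpa using hx0)
    have hex : ∃ j : ℕ, ρ / 2^(j+1) < ‖x‖ := by
      obtain ⟨k, hk⟩ := pow_unbounded_of_one_lt (ρ / ‖x‖) (by norm_num : (1:ℝ) < 2)
      refine ⟨k, ?_⟩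
      rw [div_lt_iff₀ (by positivity : (0:ℝ) < 2^(k+1))]
      rw [div_lt_iff₀ hx0'] at hk
      have h2k : (0:ℝ) < 2^k := by positivity
      have hps : (2:ℝ)^(k+1) = 2^k * 2 := pow_succ 2 k
      nlinarith [hx0']
    classical
    have hj₀ : ρ / 2^(Nat.find hex + 1) < ‖x‖ := Nat.find_spec hex
    have hupper : ‖x‖ ≤ rr (Nat.find hex) := by
      rcases Nat.eq_zero_or_pos (Nat.find hex) with h0 | hpos
      · rw [h0]
        have := mem_closedBall_zero_iff.1 hxB
        simpa [hrr] using this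
      · obtain ⟨k, hk⟩ := Nat.exists_eq_succ_of_ne_zero hpos.ne'
        have hmin := Nat.find_min hex (by omega : k < Nat.find hex)
        rw [hk]
        exact le_of_not_gt (by simpa [hrr] using hmin)
    refine Set.mem_iUnion.2 ⟨Nat.find hex, hxE, mem_closedBall_zero_iff.2 hupper, ?_⟩
    intro hc
    exact absurd (mem_closedBall_zero_iff.1 hc) (not_le.2 (by simpa [hrr] using hj₀))
  have hannulus : ∀ j : ℕ, (∫⁻ x in A j, φ x ∂μH[(n:ℝ)]) ≤
      (ENNReal.ofReal (rr (j+1)))^(-β) * (cg * (ENNReal.ofReal (rr j))^((n:ℕ):ℝ)) := by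
    intro j
    calc (∫⁻ x in A j, φ x ∂μH[(n:ℝ)])
        ≤ ∫⁻ _x in A j, (ENNReal.ofReal (rr (j+1)))^(-β) ∂μH[(n:ℝ)] := by
          refine setLIntegral_mono' (hAm j) fun x hx => ?_
          refine hmono (rr (j+1)) x ?_
          exact le_of_lt (lt_of_not_ge fun hcon => hx.2.2 (mem_closedBall_zero_iff.2 hcon))
      _ = (ENNReal.ofReal (rr (j+1)))^(-β) * μH[(n:ℝ)] (A j) := setLIntegral_const _ _
      _ ≤ _ := by
          refine mul_le_mul_right ?_ _
          refine le_trans (measure_mono ?_) (hgeo Ω hΩo hΩc (rr j) (hrrpos j))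
          exact fun x hx => ⟨hE hx.1, hx.2.1⟩
  have hterm : ∀ j : ℕ,
      (ENNReal.ofReal (rr (j+1)))^(-β) * (cg * (ENNReal.ofReal (rr j))^((n:ℕ):ℝ))
        = (cg * 2^β * G) * q ^ j := by
    intro j
    rw [hofr, hofr]
    have key : ∀ a b : ℝ, (P * (2:ℝ≥0∞) ^ a) ^ b = P ^ b * (2:ℝ≥0∞) ^ (a*b) := by
      intro a b
      rw [ENNReal.mul_rpow_of_ne_zero hP0 (h2z a), ← ENNReal.rpow_mul]
    rw [key, key, hq, ← ENNReal.rpow_natCast ((2:ℝ≥0∞) ^ (β - (n:ℝ))) j, ← ENNReal.rpow_mul]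
    push_cast
    calc P ^ (-β) * 2 ^ (-((j:ℝ)+1) * -β) * (cg * (P ^ ((n:ℕ):ℝ) * 2 ^ (-(j:ℝ) * ((n:ℕ):ℝ))))
        = cg * (P ^ (-β) * P ^ ((n:ℕ):ℝ)) *
            ((2:ℝ≥0∞) ^ (-((j:ℝ)+1) * -β) * 2 ^ (-(j:ℝ) * ((n:ℕ):ℝ))) := by ring
      _ = cg * P ^ ((n:ℝ) - β) * (2:ℝ≥0∞) ^ (β + (β - (n:ℝ)) * (j:ℝ)) := by
          rw [← ENNReal.rpow_add _ _ hP0 hPt,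
            ← ENNReal.rpow_add _ _ (by norm_num) ENNReal.ofNat_ne_top]
          push_cast
          rw [show -β + (n:ℝ) = (n:ℝ) - β by ring,
            show -((j:ℝ)+1) * -β + -(j:ℝ) * (n:ℝ) = β + (β - (n:ℝ)) * (j:ℝ) by ring]
      _ = cg * 2 ^ β * G * (2:ℝ≥0∞) ^ ((β - (n:ℝ)) * (j:ℝ)) := by
          rw [ENNReal.rpow_add _ _ (by norm_num) ENNReal.ofNat_ne_top, hG]
          ring
  have hnear : (∫⁻ x in (E ∩ cB) \ {0}, φ x ∂μH[(n:ℝ)]) ≤ cg * 2^β * (1-q)⁻¹ * G := by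
    calc (∫⁻ x in (E ∩ cB) \ {0}, φ x ∂μH[(n:ℝ)])
        ≤ ∫⁻ x in ⋃ j, A j, φ x ∂μH[(n:ℝ)] :=
          lintegral_mono' (Measure.restrict_mono hcover le_rfl) le_rfl
      _ ≤ ∑' j, ∫⁻ x in A j, φ x ∂μH[(n:ℝ)] := lintegral_iUnion_le _ _
      _ ≤ ∑' j, (cg * 2^β * G) * q ^ j := by
          refine ENNReal.tsum_le_tsum fun j => ?_
          rw [← hterm j]
          exact hannulus j
      _ = (cg * 2^β * G) * (1-q)⁻¹ := by rw [ENNReal.tsum_mul_left, ENNReal.tsum_geometric]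
      _ = cg * 2^β * (1-q)⁻¹ * G := by ring
  have hfar' : P ^ (-β) * m = G := by
    rw [← hPn, ← ENNReal.rpow_add _ _ hP0 hPt, hG]
    congr 1
    ring
  calc (∫⁻ x in E, φ x ∂μH[(n:ℝ)])
      ≤ (∫⁻ x in E ∩ cB, φ x ∂μH[(n:ℝ)]) + ∫⁻ x in E \ cB, φ x ∂μH[(n:ℝ)] := step1
    _ ≤ cg * 2^β * (1-q)⁻¹ * G + G := add_le_add (le_trans hnear0 hnear) (hfar.trans_eq hfar')
    _ = D * G := by rw [hD]; ring
    _ = D * m ^ (((n:ℝ) - β)/(n:ℝ)) := by rw [hGm]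
end

section
/- Let n ≥ 1 be an integer, ε > 0, and let Ω ⊂ ℝ^{n+1} be an open convex set. Then there exist an integer N with 1 ≤ N ≤ 2(n+1), closed sets W_1, …, W_N ⊂ ℝ^n with nonempty interior, Lipschitz functions g_i : W_i → ℝ satisfying |∇g_i(z)| ≤ √(n+ε) for ℋ^n-almost every z ∈ W_i, and rigid rotations R_1, …, R_N of ℝ^{n+1}, such that, writing M_i := R_i({ (z, g_i(z)) : z ∈ W_i }), the boundary ∂Ω is contained in M_1 ∪ ⋯ ∪ M_N up to a set of ℋ^n-measure zero, i.e. ℋ^n( ∂Ω ∖ ⋃_{i=1}^N M_i ) = 0. -/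
open MeasureTheory
open scoped ENNReal NNReal RealInnerProductSpace
namespace CGC

noncomputable def proj (n : ℕ) (j : Fin (n+1)) (x : EuclideanSpace ℝ (Fin (n+1))) :
    EuclideanSpace ℝ (Fin n) := WithLp.toLp 2 (fun k : Fin n => x (Equiv.swap j (Fin.last n) k.castSucc))

lemma sum_split (n : ℕ) (j : Fin (n+1)) (f : Fin (n+1) → ℝ) :
    ∑ m, f m = f j + ∑ k : Fin n, f (Equiv.swap j (Fin.last n) k.castSucc) := by
  rw [← Equiv.sum_comp (Equiv.swap j (Fin.last n)) f, Fin.sum_univ_castSucc]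
  simp [Equiv.swap_apply_right, add_comm]

lemma inner_split (n : ℕ) (j : Fin (n+1)) (ν v : EuclideanSpace ℝ (Fin (n+1))) :
    ⟪ν, v⟫ = ν j * v j + ⟪proj n j ν, proj n j v⟫ := by
  simp only [PiLp.inner_apply, RCLike.inner_apply, conj_trivial]
  have h := sum_split n j (fun m => v m * ν m)
  simp only [proj, WithLp.ofLp_toLp] at h ⊢
  rw [h]; ring

lemma norm_proj_sq (n : ℕ) (j : Fin (n+1)) (x : EuclideanSpace ℝ (Fin (n+1))) :
    ‖proj n j x‖ ^ 2 = ‖x‖ ^ 2 - x j ^ 2 := by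
  have h1 := @real_inner_self_eq_norm_sq _ _ _ x
  have h2 := @real_inner_self_eq_norm_sq _ _ _ (proj n j x)
  have h3 := inner_split n j x x
  nlinarith

def Sset (n : ℕ) (Ω : Set (EuclideanSpace ℝ (Fin (n+1)))) (j : Fin (n+1)) (σ : ℝ) :
    Set (EuclideanSpace ℝ (Fin (n+1))) :=
  {x | x ∈ frontier Ω ∧ ∃ ν : EuclideanSpace ℝ (Fin (n+1)), ‖ν‖ = 1 ∧
    Real.sqrt (1/((n:ℝ)+1)) ≤ σ * ν j ∧ ∀ a ∈ Ω, ⟪ν, a⟫ ≤ ⟪ν, x⟫}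

lemma half_estimate (n : ℕ) (Ω : Set (EuclideanSpace ℝ (Fin (n+1)))) (j : Fin (n+1)) (σ : ℝ)
    (hσ : σ = 1 ∨ σ = -1) {x y : EuclideanSpace ℝ (Fin (n+1))}
    (hx : x ∈ Sset n Ω j σ) (hy : y ∈ Sset n Ω j σ) :
    σ * (y j - x j) ≤ Real.sqrt n * ‖proj n j x - proj n j y‖ := by
  obtain ⟨hxf, ν, hν1, hνj, hνsup⟩ := hx
  have hσ2 : σ ^ 2 = 1 := by rcases hσ with h | h <;> simp [h]
  -- y ∈ closure Ω and the support inequality extends by continuity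
  have hyc : y ∈ closure Ω := hy.1.1
  have hsupp : ⟪ν, y⟫ ≤ ⟪ν, x⟫ := by
    have hcl : closure Ω ⊆ {a | ⟪ν, a⟫ ≤ ⟪ν, x⟫} :=
      closure_minimal (fun a ha => hνsup a ha)
        (isClosed_le (Continuous.inner continuous_const continuous_id) continuous_const)
    exact hcl hyc
  have hio : ⟪ν, y - x⟫ ≤ 0 := by rw [inner_sub_right]; linarith
  have hsplit := inner_split n j ν (y - x)
  have hCS : |⟪proj n j ν, proj n j (y - x)⟫| ≤ ‖proj n j ν‖ * ‖proj n j (y - x)‖ :=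
    abs_real_inner_le_norm _ _
  set Δ : ℝ := ‖proj n j x - proj n j y‖ with hΔ
  have hΔeq : ‖proj n j (y - x)‖ = Δ := by
    rw [hΔ, ← norm_neg]
    congr 1
    have : proj n j (y - x) = proj n j y - proj n j x := by ext k; simp [proj]
    rw [this]; abel
  have hΔ0 : 0 ≤ Δ := norm_nonneg _
  have hsub : (y - x) j = y j - x j := rfl
  have h1 : ν j * (y j - x j) ≤ ‖proj n j ν‖ * Δ := by
    rw [hsub] at hsplit
    rw [hΔeq] at hCS
    have := abs_le.1 hCS
    linarith
  set A : ℝ := σ * ν j with hA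
  have hs0 : (0:ℝ) < 1/(n+1) := by positivity
  have hA0 : 0 < A := lt_of_lt_of_le (Real.sqrt_pos.2 hs0) hνj
  have hA2 : 1/(n+1) ≤ A ^ 2 := by
    have := Real.sq_sqrt hs0.le
    nlinarith [Real.sqrt_nonneg (1/(n+1:ℝ))]
  have hP2 : ‖proj n j ν‖ ^ 2 = 1 - A ^ 2 := by
    have := norm_proj_sq n j ν
    rw [hν1] at this
    have hAν : A ^ 2 = ν j ^ 2 := by rw [hA]; nlinarith
    rw [this, hAν]; ring
  have h2 : ‖proj n j ν‖ ≤ A * Real.sqrt n := by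
    have hp : ‖proj n j ν‖ = Real.sqrt (‖proj n j ν‖ ^ 2) :=
      (Real.sqrt_sq (norm_nonneg _)).symm
    rw [hp]
    have hle : ‖proj n j ν‖ ^ 2 ≤ A ^ 2 * n := by
      rw [hP2]
      have hn1 : (0:ℝ) < (n:ℝ) + 1 := by positivity
      rw [div_le_iff₀ hn1] at hA2
      nlinarith
    refine le_trans (Real.sqrt_le_sqrt hle) ?_
    rw [Real.sqrt_mul (sq_nonneg A), Real.sqrt_sq hA0.le]
  have h3 : A * (σ * (y j - x j)) ≤ A * (Real.sqrt n * Δ) := by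
    have e : A * (σ * (y j - x j)) = σ ^ 2 * (ν j * (y j - x j)) := by ring
    have h4 : ‖proj n j ν‖ * Δ ≤ A * Real.sqrt n * Δ :=
      mul_le_mul_of_nonneg_right h2 hΔ0
    rw [e, hσ2]
    nlinarith
  exact le_of_mul_le_mul_left h3 hA0

lemma estimate (n : ℕ) (Ω : Set (EuclideanSpace ℝ (Fin (n+1)))) (j : Fin (n+1)) (σ : ℝ)
    (hσ : σ = 1 ∨ σ = -1) {x y : EuclideanSpace ℝ (Fin (n+1))}
    (hx : x ∈ Sset n Ω j σ) (hy : y ∈ Sset n Ω j σ) :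
    |x j - y j| ≤ Real.sqrt n * ‖proj n j x - proj n j y‖ := by
  have h1 := half_estimate n Ω j σ hσ hx hy
  have h2 := half_estimate n Ω j σ hσ hy hx
  rw [show ‖proj n j y - proj n j x‖ = ‖proj n j x - proj n j y‖ from norm_sub_rev _ _] at h2
  have hσ2 : σ ^ 2 = 1 := by rcases hσ with h | h <;> simp [h]
  rcases hσ with h | h <;> subst h <;> rw [abs_sub_le_iff] <;>
    constructor <;> linarith

lemma cover (n : ℕ) (Ω : Set (EuclideanSpace ℝ (Fin (n+1)))) (hΩopen : IsOpen Ω)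
    (hΩconv : Convex ℝ Ω) (hne : Ω.Nonempty) {x : EuclideanSpace ℝ (Fin (n+1))}
    (hxf : x ∈ frontier Ω) :
    ∃ j σ, (σ = (1:ℝ) ∨ σ = -1) ∧ x ∈ Sset n Ω j σ := by
  have hxn : x ∉ Ω := by
    intro hx
    rw [hΩopen.frontier_eq] at hxf
    exact hxf.2 hx
  obtain ⟨f, hf⟩ := geometric_hahn_banach_open_point hΩconv hΩopen hxn
  set v := (InnerProductSpace.toDual ℝ (EuclideanSpace ℝ (Fin (n+1)))).symm f with hv
  have hvapp : ∀ a, ⟪v, a⟫ = f a := fun a => InnerProductSpace.toDual_symm_apply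
  obtain ⟨a0, ha0⟩ := hne
  have hv0 : v ≠ 0 := by
    intro h
    have e1 := hvapp a0
    have e2 := hvapp x
    rw [h, inner_zero_left] at e1 e2
    have := hf a0 ha0
    rw [← e1, ← e2] at this
    exact lt_irrefl _ this
  have hvnorm : (0:ℝ) < ‖v‖ := norm_pos_iff.2 hv0
  set ν := ‖v‖⁻¹ • v with hνdef
  have hν1 : ‖ν‖ = 1 := norm_smul_inv_norm hv0
  have hνsup : ∀ a ∈ Ω, ⟪ν, a⟫ ≤ ⟪ν, x⟫ := by
    intro a ha
    rw [hνdef, real_inner_smul_left, real_inner_smul_left, hvapp, hvapp]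
    exact mul_le_mul_of_nonneg_left (hf a ha).le (inv_nonneg.2 hvnorm.le)
  -- find a big coordinate
  have hsum : ∑ m, ν m ^ 2 = 1 := by
    have := @real_inner_self_eq_norm_sq _ _ _ ν
    rw [hν1] at this
    simp only [PiLp.inner_apply, RCLike.inner_apply, conj_trivial] at this
    calc ∑ m, ν m ^ 2 = ∑ m, ν m * ν m := by simp [sq]
    _ = 1 := by rw [this]; norm_num
  have hbig : ∃ j, 1/((n:ℝ)+1) ≤ ν j ^ 2 := by
    by_contra hcon
    push_neg at hcon
    have hlt : ∑ m, ν m ^ 2 < ∑ _m : Fin (n+1), 1/((n:ℝ)+1) :=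
      Finset.sum_lt_sum_of_nonempty Finset.univ_nonempty (fun m _ => hcon m)
    rw [hsum] at hlt
    simp only [Finset.sum_const, Finset.card_univ, Fintype.card_fin, nsmul_eq_mul] at hlt
    have he : ((n:ℝ)+1) * (1/((n:ℝ)+1)) = 1 := by
      rw [mul_one_div]; exact div_self (by positivity)
    push_cast at hlt
    rw [he] at hlt
    exact lt_irrefl _ hlt
  obtain ⟨j, hj⟩ := hbig
  have habs : Real.sqrt (1/((n:ℝ)+1)) ≤ |ν j| := by
    rw [← Real.sqrt_sq_eq_abs]
    exact Real.sqrt_le_sqrt hj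
  by_cases hsign : 0 ≤ ν j
  · refine ⟨j, 1, Or.inl rfl, hxf, ν, hν1, ?_, hνsup⟩
    rw [one_mul]
    rwa [abs_of_nonneg hsign] at habs
  · refine ⟨j, -1, Or.inr rfl, hxf, ν, hν1, ?_, hνsup⟩
    push_neg at hsign
    rw [abs_of_neg hsign] at habs
    push_cast
    linarith

lemma R_snoc (n : ℕ) (j : Fin (n+1)) (x : EuclideanSpace ℝ (Fin (n+1))) :
    (LinearIsometryEquiv.piLpCongrLeft 2 ℝ ℝ (Equiv.swap j (Fin.last n)))
      (WithLp.toLp 2 (Fin.snoc (α := fun _ => ℝ) (WithLp.ofLp (proj n j x)) (x j))) = x := by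
  ext m
  rw [LinearIsometryEquiv.piLpCongrLeft_apply]
  show (Fin.snoc (α := fun _ => ℝ) (WithLp.ofLp (proj n j x)) (x j)) ((Equiv.swap j (Fin.last n)).symm m) = x m
  rw [Equiv.symm_swap]
  by_cases hm : m = j
  · subst hm
    rw [Equiv.swap_apply_left, Fin.snoc_last]
  · by_cases hml : m = Fin.last n
    · subst hml
      have hj : j ≠ Fin.last n := fun h => hm h.symm
      rw [Equiv.swap_apply_right, ← Fin.castSucc_castPred j hj, Fin.snoc_castSucc]
      show x (Equiv.swap j (Fin.last n) ((j.castPred hj).castSucc)) = x (Fin.last n)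
      rw [Fin.castSucc_castPred, Equiv.swap_apply_left]
    · rw [Equiv.swap_apply_of_ne_of_ne hm hml, ← Fin.castSucc_castPred m hml,
        Fin.snoc_castSucc]
      show x (Equiv.swap j (Fin.last n) ((m.castPred hml).castSucc)) = x m
      rw [Fin.castSucc_castPred, Equiv.swap_apply_of_ne_of_ne hm hml]


end CGC

/-- The boundary of an open convex set `Ω ⊆ ℝ^{n+1}` is covered, up to an `ℋ^n`-null set,
by at most `2(n+1)` rotated graphs of Lipschitz functions on closed subsets of `ℝ^n` with
nonempty interior, whose gradients are a.e. bounded by `√(n+ε)`. -/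
theorem convex_boundary_covered_by_lipschitz_graphs
    (n : ℕ) (hn : 1 ≤ n) (ε : ℝ) (hε : 0 < ε)
    (Ω : Set (EuclideanSpace ℝ (Fin (n+1)))) (hΩopen : IsOpen Ω) (hΩconv : Convex ℝ Ω) :
    ∃ N : ℕ, 1 ≤ N ∧ N ≤ 2*(n+1) ∧
      ∃ (W : Fin N → Set (EuclideanSpace ℝ (Fin n)))
        (g : Fin N → EuclideanSpace ℝ (Fin n) → ℝ)
        (R : Fin N → (EuclideanSpace ℝ (Fin (n+1)) ≃ₗᵢ[ℝ] EuclideanSpace ℝ (Fin (n+1)))),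
        (∀ i, IsClosed (W i)) ∧
        (∀ i, (interior (W i)).Nonempty) ∧
        (∀ i, ∃ L : ℝ≥0, LipschitzWith L (g i)) ∧
        (∀ i, ∀ᵐ z ∂(μH[(n:ℝ)] : Measure (EuclideanSpace ℝ (Fin n))),
          z ∈ W i → ‖fderiv ℝ (g i) z‖ ≤ Real.sqrt ((n:ℝ) + ε)) ∧
        μH[(n:ℝ)] (frontier Ω \
          ⋃ i, R i '' ((fun z => (WithLp.toLp 2 (Fin.snoc (α := fun _ => ℝ) (WithLp.ofLp z) (g i z)) : EuclideanSpace ℝ (Fin (n+1)))) '' W i))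
          = 0 := by
  classical
  have hsqrt : Real.sqrt n ≤ Real.sqrt ((n:ℝ) + ε) := Real.sqrt_le_sqrt (by linarith)
  by_cases hfr : frontier Ω = ∅
  · -- trivial case: empty boundary
    refine ⟨1, le_refl 1, by omega, fun _ => Metric.closedBall 0 1, fun _ _ => 0,
      fun _ => LinearIsometryEquiv.refl ℝ _, fun _ => Metric.isClosed_closedBall,
      fun _ => ⟨0, Metric.ball_subset_interior_closedBall (Metric.mem_ball_self one_pos)⟩,
      fun _ => ⟨0, LipschitzWith.const 0⟩, ?_, ?_⟩
    · intro i
      refine Filter.Eventually.of_forall (fun z _ => ?_)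
      change ‖fderiv ℝ (Function.const (EuclideanSpace ℝ (Fin n)) (0:ℝ)) z‖ ≤ _
      rw [fderiv_const]
      simp [Real.sqrt_nonneg]
    · rw [hfr]
      simp
  · -- main case
    have hne : Ω.Nonempty := by
      rw [Set.nonempty_iff_ne_empty]
      intro h
      rw [h, frontier_empty] at hfr
      exact hfr rfl
    set K : ℝ≥0 := ⟨Real.sqrt n, Real.sqrt_nonneg _⟩ with hK
    refine ⟨2*(n+1), by omega, le_refl _, ?_⟩
    set jdx : Fin (2*(n+1)) → Fin (n+1) := fun i => ⟨i.val % (n+1), Nat.mod_lt _ (by omega)⟩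
      with hjdx
    set sdx : Fin (2*(n+1)) → ℝ := fun i => if i.val < n+1 then 1 else -1 with hsdx
    have hsd : ∀ i, sdx i = 1 ∨ sdx i = -1 := by
      intro i
      rw [hsdx]
      dsimp only
      split <;> simp
    set S : Fin (2*(n+1)) → Set (EuclideanSpace ℝ (Fin (n+1))) :=
      fun i => CGC.Sset n Ω (jdx i) (sdx i) with hS
    set P : Fin (2*(n+1)) → Set (EuclideanSpace ℝ (Fin n)) :=
      fun i => CGC.proj n (jdx i) '' S i with hP
    set hfun : Fin (2*(n+1)) → EuclideanSpace ℝ (Fin n) → ℝ := fun i z =>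
      if hz : ∃ x, x ∈ S i ∧ CGC.proj n (jdx i) x = z then hz.choose (jdx i) else 0 with hhfun
    have hfun_eq : ∀ i, ∀ x ∈ S i, hfun i (CGC.proj n (jdx i) x) = x (jdx i) := by
      intro i x hx
      have hz : ∃ y, y ∈ S i ∧ CGC.proj n (jdx i) y = CGC.proj n (jdx i) x := ⟨x, hx, rfl⟩
      rw [hhfun]
      dsimp only
      rw [dif_pos hz]
      obtain ⟨hy1, hy2⟩ := hz.choose_spec
      have hest := CGC.estimate n Ω (jdx i) (sdx i) (hsd i) hy1 hx
      rw [hy2, sub_self, norm_zero, mul_zero] at hest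
      have := abs_nonneg (hz.choose (jdx i) - x (jdx i))
      have h0 : |hz.choose (jdx i) - x (jdx i)| = 0 := le_antisymm hest this
      rw [abs_eq_zero, sub_eq_zero] at h0
      exact h0
    have hfun_lip : ∀ i, LipschitzOnWith K (hfun i) (P i) := by
      intro i
      rw [lipschitzOnWith_iff_dist_le_mul]
      rintro z ⟨x, hx, rfl⟩ w ⟨y, hy, rfl⟩
      rw [hfun_eq i x hx, hfun_eq i y hy, Real.dist_eq, dist_eq_norm]
      exact CGC.estimate n Ω (jdx i) (sdx i) (hsd i) hx hy
    choose gext hlip heqon using fun i => (hfun_lip i).extend_real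
    set W0 : Fin (2*(n+1)) → Set (EuclideanSpace ℝ (Fin n)) :=
      fun i => closure (P i) ∪ Metric.closedBall 0 1 with hW0
    refine ⟨W0, gext,
      fun i => LinearIsometryEquiv.piLpCongrLeft 2 ℝ ℝ (Equiv.swap (jdx i) (Fin.last n)),
      fun i => isClosed_closure.union Metric.isClosed_closedBall,
      fun i => ⟨0, interior_mono Set.subset_union_right
        (Metric.ball_subset_interior_closedBall (Metric.mem_ball_self one_pos))⟩,
      fun i => ⟨K, hlip i⟩, ?_, ?_⟩
    · intro i
      refine Filter.Eventually.of_forall (fun z _ => ?_)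
      refine le_trans (norm_fderiv_le_of_lipschitz ℝ (hlip i)) ?_
      exact le_trans (le_of_eq rfl) hsqrt
    · have hsub : frontier Ω ⊆
          ⋃ i, (LinearIsometryEquiv.piLpCongrLeft 2 ℝ ℝ (Equiv.swap (jdx i) (Fin.last n))) ''
            ((fun z => (WithLp.toLp 2 (Fin.snoc (α := fun _ => ℝ) (WithLp.ofLp z) (gext i z)) : EuclideanSpace ℝ (Fin (n+1)))) ''
              (W0 i)) := by
        intro x hx
        obtain ⟨j, σ, hσ, hxS⟩ := CGC.cover n Ω hΩopen hΩconv hne hx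
        -- pick the index i realizing (j, σ)
        obtain ⟨i, hij, his⟩ : ∃ i : Fin (2*(n+1)), jdx i = j ∧ sdx i = σ := by
          rcases hσ with h | h
          · refine ⟨⟨j.val, by omega⟩, ?_, ?_⟩
            · rw [hjdx]
              exact Fin.ext (Nat.mod_eq_of_lt j.isLt)
            · rw [hsdx, h]
              simp only
              rw [if_pos j.isLt]
          · refine ⟨⟨n+1+j.val, by omega⟩, ?_, ?_⟩
            · rw [hjdx]
              refine Fin.ext ?_
              show (n+1+j.val) % (n+1) = j.val
              rw [Nat.add_mod_left]
              exact Nat.mod_eq_of_lt j.isLt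
            · rw [hsdx, h]
              simp only
              rw [if_neg (by omega)]
        have hxS' : x ∈ S i := by rw [hS]; dsimp only; rw [hij, his]; exact hxS
        have hproj : CGC.proj n (jdx i) x ∈ P i := ⟨x, hxS', rfl⟩
        have hW : CGC.proj n (jdx i) x ∈ W0 i :=
          Set.mem_union_left _ (subset_closure hproj)
        have hgval : gext i (CGC.proj n (jdx i) x) = x (jdx i) := by
          rw [← heqon i hproj, hfun_eq i x hxS']
        refine Set.mem_iUnion.2 ⟨i, ?_⟩
        refine ⟨WithLp.toLp 2 (Fin.snoc (α := fun _ => ℝ) (WithLp.ofLp (CGC.proj n (jdx i) x)) (x (jdx i))), ?_, ?_⟩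
        · refine ⟨CGC.proj n (jdx i) x, hW, ?_⟩
          simp only [hgval]
        · exact CGC.R_snoc n (jdx i) x
      beta_reduce
      rw [Set.diff_eq_empty.2 hsub]
      exact measure_empty
end

section
/- Let s ∈ (0,1) and p ≥ 1 with sp < n, set p*_s = np/(n−sp), and let N ∈ ℤ. Suppose (a_i)_{i∈ℤ} is a bounded, non-negative, non-increasing sequence of real numbers with a_i = 0 for all i ≥ N. Then ∑_{i∈ℤ} 2^{pi} a_i^{(n−sp)/n} ≤ 2^{p*_s} ∑_{i∈ℤ, a_i ≠ 0} 2^{pi} a_i^{−sp/n} a_{i+1}. -/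
set_option maxHeartbeats 1000000 in
/-- The elementary series inequality (Lemma 6.2 of the Hitchhiker's guide):
for a bounded, non-negative, non-increasing sequence `(a_i)_{i∈ℤ}` vanishing for `i ≥ N`,
`∑_{i∈ℤ} 2^{pi} a_i^{(n−sp)/n} ≤ 2^{p*_s} ∑_{i : a_i ≠ 0} 2^{pi} a_i^{−sp/n} a_{i+1}`. -/
theorem series_inequality_of_levels
    (n : ℕ) (hn : 1 ≤ n) (s p : ℝ) (hs : s ∈ Set.Ioo (0:ℝ) 1) (hp : 1 ≤ p)
    (hsp : s * p < n) (N : ℤ) (a : ℤ → ℝ)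
    (ha_nonneg : ∀ i, 0 ≤ a i)
    (ha_bdd : ∃ B : ℝ, ∀ i, a i ≤ B)
    (ha_mono : ∀ i j : ℤ, i ≤ j → a j ≤ a i)
    (ha_zero : ∀ i ≥ N, a i = 0) :
    (∑' i : ℤ, (2:ℝ) ^ (p * i) * a i ^ (((n:ℝ) - s*p)/(n:ℝ)))
      ≤ (2:ℝ) ^ ((n:ℝ)*p/((n:ℝ) - s*p)) *
        ∑' i : ℤ, (if a i ≠ 0 then (2:ℝ) ^ (p * i) * a i ^ (-(s*p)/(n:ℝ)) * a (i+1) else 0) := by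
  obtain ⟨B, hB⟩ := ha_bdd
  have hn0 : (0:ℝ) < n := by exact_mod_cast hn
  have hp0 : (0:ℝ) < p := lt_of_lt_of_le one_pos hp
  have hs0 : (0:ℝ) < s := hs.1
  have hsp0 : 0 < s * p := mul_pos hs0 hp0
  set θ : ℝ := ((n:ℝ) - s*p)/(n:ℝ) with hθdef
  have hθ0 : 0 < θ := div_pos (by linarith) hn0
  have hθ1 : θ < 1 := by rw [hθdef, div_lt_one hn0]; linarith
  set f : ℤ → ℝ := fun i => (2:ℝ) ^ (p * i) * a i ^ θ with hfdef
  set g : ℤ → ℝ := fun i =>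
    (if a i ≠ 0 then (2:ℝ) ^ (p * i) * a i ^ (-(s*p)/(n:ℝ)) * a (i+1) else 0) with hgdef
  have hnsθ : (n:ℝ)/s * (1-θ) = p := by rw [hθdef]; field_simp; ring
  have hf_nonneg : ∀ i, 0 ≤ f i := fun i =>
    mul_nonneg (Real.rpow_nonneg (by norm_num) _) (Real.rpow_nonneg (ha_nonneg i) _)
  have hg_nonneg : ∀ i, 0 ≤ g i := by
    intro i
    simp only [hgdef]
    split
    · exact mul_nonneg (mul_nonneg (Real.rpow_nonneg (by norm_num) _)
        (Real.rpow_nonneg (ha_nonneg i) _)) (ha_nonneg (i+1))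
    · exact le_refl 0
  have hgf : ∀ i, g i ≤ f i := by
    intro i
    simp only [hgdef, hfdef]
    split
    · rename_i h
      have h1 : 0 < a i := lt_of_le_of_ne (ha_nonneg i) (Ne.symm h)
      calc (2:ℝ) ^ (p * i) * a i ^ (-(s*p)/(n:ℝ)) * a (i+1)
          ≤ (2:ℝ) ^ (p * i) * a i ^ (-(s*p)/(n:ℝ)) * a i :=
            mul_le_mul_of_nonneg_left (ha_mono i (i+1) (by omega))
              (mul_nonneg (Real.rpow_nonneg (by norm_num) _) (Real.rpow_nonneg h1.le _))
        _ = (2:ℝ) ^ (p * i) * a i ^ θ := by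
            rw [mul_assoc, ← Real.rpow_add_one h]
            congr 2
            rw [hθdef]
            field_simp
            ring
    · exact mul_nonneg (Real.rpow_nonneg (by norm_num) _) (Real.rpow_nonneg (ha_nonneg i) _)
  have hB0 : 0 ≤ B := le_trans (ha_nonneg 0) (hB 0)
  have hf_sum : Summable f := by
    apply Summable.of_nat_of_neg_add_one
    · apply summable_of_ne_finset_zero (s := Finset.range N.toNat)
      intro m hm
      simp only [Finset.mem_range, not_lt] at hm
      have hz : a (m : ℤ) = 0 := by
        apply ha_zero
        calc N ≤ (N.toNat : ℤ) := Int.self_le_toNat N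
          _ ≤ (m : ℤ) := by exact_mod_cast hm
      simp only [hfdef, hz, Real.zero_rpow hθ0.ne', mul_zero]
    · apply Summable.of_nonneg_of_le (fun m => hf_nonneg _)
        (f := fun m : ℕ => (B ^ θ * (2:ℝ) ^ (-p)) * ((2:ℝ) ^ (-p)) ^ m)
      · intro m
        simp only [hfdef]
        have e1 : (2:ℝ) ^ (p * ((-((m:ℤ)+1) : ℤ) : ℝ)) = (2:ℝ)^(-p) * ((2:ℝ)^(-p))^(m:ℕ) := by
          rw [← Real.rpow_natCast ((2:ℝ)^(-p)) m, ← Real.rpow_mul (by norm_num : (0:ℝ) ≤ 2),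
            ← Real.rpow_add (by norm_num : (0:ℝ) < 2)]
          congr 1
          push_cast
          ring
        rw [e1]
        calc (2:ℝ)^(-p) * ((2:ℝ)^(-p))^(m:ℕ) * a (-((m:ℤ)+1)) ^ θ
            ≤ (2:ℝ)^(-p) * ((2:ℝ)^(-p))^(m:ℕ) * B ^ θ := by
              apply mul_le_mul_of_nonneg_left
              · exact Real.rpow_le_rpow (ha_nonneg _) (hB _) hθ0.le
              · positivity
          _ = B ^ θ * (2:ℝ)^(-p) * ((2:ℝ)^(-p))^(m:ℕ) := by ring
      · apply Summable.mul_left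
        apply summable_geometric_of_lt_one (by positivity)
        rw [Real.rpow_neg (by norm_num), inv_lt_one_iff₀]
        right
        exact (Real.one_lt_rpow_iff_of_pos (by norm_num)).2 (Or.inl ⟨by norm_num, hp0⟩)
  have hg_sum : Summable g := hf_sum.of_nonneg_of_le hg_nonneg hgf
  set T := ∑' i, f i with hTdef
  set S := ∑' i, g i with hSdef
  have hT0 : 0 ≤ T := tsum_nonneg hf_nonneg
  have hS0 : 0 ≤ S := tsum_nonneg hg_nonneg
  set c : ℝ := (2:ℝ) ^ ((n:ℝ)/s) with hcdef
  have hc : (0:ℝ) < c := Real.rpow_pos_of_pos (by norm_num) _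
  -- key identity
  have key : ∀ i : ℤ, f i = (g (i-1)) ^ θ * (c * f (i-1)) ^ (1-θ) := by
    intro i
    by_cases h0 : a (i-1) = 0
    · have hai : a i = 0 := le_antisymm (h0 ▸ ha_mono (i-1) i (by omega)) (ha_nonneg i)
      simp only [hfdef, hgdef]
      rw [if_neg (by simp [h0]), hai, h0, Real.zero_rpow hθ0.ne']
      simp [Real.zero_rpow hθ0.ne']
    · have h1 : 0 < a (i-1) := lt_of_le_of_ne (ha_nonneg _) (Ne.symm h0)
      simp only [hfdef, hgdef]
      rw [if_pos h0, sub_add_cancel]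
      have hexp : -(s*p)/(n:ℝ) = θ - 1 := by rw [hθdef]; field_simp; ring
      rw [hexp, hcdef]
      have hy : 0 ≤ a i := ha_nonneg i
      have hcast : ((i - 1 : ℤ) : ℝ) = (i:ℝ) - 1 := by push_cast; ring
      rw [hcast]
      rw [Real.mul_rpow (by positivity) hy,
          Real.mul_rpow (by positivity) (Real.rpow_nonneg h1.le _),
          Real.mul_rpow (by positivity) (by positivity),
          Real.mul_rpow (by positivity) (Real.rpow_nonneg h1.le _),
          ← Real.rpow_mul (by norm_num : (0:ℝ) ≤ 2),
          ← Real.rpow_mul h1.le,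
          ← Real.rpow_mul (by norm_num : (0:ℝ) ≤ 2),
          ← Real.rpow_mul (by norm_num : (0:ℝ) ≤ 2),
          ← Real.rpow_mul h1.le]
      have e2 : (2:ℝ) ^ (p * (i:ℝ)) =
          (2:ℝ) ^ (p * ((i:ℝ)-1) * θ) *
            ((2:ℝ) ^ ((n:ℝ)/s * (1-θ)) * (2:ℝ) ^ (p * ((i:ℝ)-1) * (1-θ))) := by
        rw [← Real.rpow_add (by norm_num : (0:ℝ) < 2), ← Real.rpow_add (by norm_num : (0:ℝ) < 2)]
        congr 1
        rw [hnsθ]; ring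
      have e3 : a (i-1) ^ ((θ-1) * θ) * a (i-1) ^ (θ * (1-θ)) = 1 := by
        rw [← Real.rpow_add h1, show (θ-1)*θ + θ*(1-θ) = 0 by ring, Real.rpow_zero]
      calc (2:ℝ) ^ (p * (i:ℝ)) * a i ^ θ
          = ((2:ℝ) ^ (p * ((i:ℝ)-1) * θ) *
              ((2:ℝ) ^ ((n:ℝ)/s * (1-θ)) * (2:ℝ) ^ (p * ((i:ℝ)-1) * (1-θ))))
            * (a (i-1) ^ ((θ-1) * θ) * a (i-1) ^ (θ * (1-θ))) * a i ^ θ := by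
            rw [← e2, e3]; ring
        _ = (2:ℝ) ^ (p * ((i:ℝ)-1) * θ) * a (i-1) ^ ((θ-1) * θ) * a i ^ θ *
            ((2:ℝ) ^ ((n:ℝ)/s * (1-θ)) *
              ((2:ℝ) ^ (p * ((i:ℝ)-1) * (1-θ)) * a (i-1) ^ (θ * (1-θ)))) := by
            ring
  -- Hölder
  have hconj : (1/θ).HolderConjugate (1/(1-θ)) := by
    rw [Real.holderConjugate_iff]
    constructor
    · exact (one_lt_div hθ0).2 hθ1
    · rw [one_div, one_div, inv_inv, inv_inv]; ring
  have hsum1 : Summable (fun i : ℤ => g (i-1)) := (Equiv.subRight (1:ℤ)).summable_iff.2 hg_sum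
  have hsum2 : Summable (fun i : ℤ => c * f (i-1)) :=
    ((Equiv.subRight (1:ℤ)).summable_iff.2 hf_sum).mul_left c
  have hgl : ∀ i : ℤ, ((g (i-1)) ^ θ) ^ (1/θ) = g (i-1) := fun i => by
    rw [one_div, Real.rpow_rpow_inv (hg_nonneg _) hθ0.ne']
  have hfl : ∀ i : ℤ, ((c * f (i-1)) ^ (1-θ)) ^ (1/(1-θ)) = c * f (i-1) := fun i => by
    rw [one_div, Real.rpow_rpow_inv (mul_nonneg hc.le (hf_nonneg _)) (by linarith)]
  have holder : T ≤ S ^ θ * (c * T) ^ (1-θ) := by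
    have H := Real.inner_le_Lp_mul_Lq_tsum_of_nonneg hconj
      (f := fun i : ℤ => (g (i-1)) ^ θ) (g := fun i : ℤ => (c * f (i-1)) ^ (1-θ))
      (fun i => Real.rpow_nonneg (hg_nonneg _) _)
      (fun i => Real.rpow_nonneg (mul_nonneg hc.le (hf_nonneg _)) _)
      (by simpa only [hgl] using hsum1)
      (by simpa only [hfl] using hsum2)
    simp only [hgl, hfl, one_div_one_div] at H
    have eT : ∑' i : ℤ, (g (i-1)) ^ θ * ((c * f (i-1)) ^ (1-θ)) = T := by
      rw [hTdef]
      exact tsum_congr fun i => (key i).symm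
    have eS : ∑' i : ℤ, g (i-1) = S := (Equiv.subRight (1:ℤ)).tsum_eq g
    have ecT : ∑' i : ℤ, c * f (i-1) = c * T := by
      rw [tsum_mul_left, hTdef]
      congr 1
      exact (Equiv.subRight (1:ℤ)).tsum_eq f
    rw [eT, eS, ecT] at H
    exact H
  have holder2 : T ≤ (2:ℝ)^p * S^θ * T^(1-θ) := by
    have : (c * T) ^ (1-θ) = (2:ℝ)^p * T^(1-θ) := by
      rw [Real.mul_rpow hc.le hT0, hcdef, ← Real.rpow_mul (by norm_num : (0:ℝ) ≤ 2), hnsθ]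
    calc T ≤ S ^ θ * (c * T) ^ (1-θ) := holder
      _ = (2:ℝ)^p * S^θ * T^(1-θ) := by rw [this]; ring
  rcases eq_or_lt_of_le hT0 with h | hTpos
  · rw [← h]
    exact mul_nonneg (Real.rpow_nonneg (by norm_num) _) hS0
  · have hTpow : 0 < T^(1-θ) := Real.rpow_pos_of_pos hTpos _
    have h2 : T^θ ≤ (2:ℝ)^p * S^θ := by
      apply le_of_mul_le_mul_right _ hTpow
      calc T^θ * T^(1-θ) = T := by
            rw [← Real.rpow_add hTpos]; norm_num
        _ ≤ (2:ℝ)^p * S^θ * T^(1-θ) := holder2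
    have h3 : T ≤ (2:ℝ)^(p * (1/θ)) * S := by
      have h4 := Real.rpow_le_rpow (Real.rpow_nonneg hT0 θ) h2 (le_of_lt (by positivity : (0:ℝ) < 1/θ))
      rwa [one_div, Real.rpow_rpow_inv hT0 hθ0.ne',
        Real.mul_rpow (Real.rpow_nonneg (by norm_num) _) (Real.rpow_nonneg hS0 _),
        Real.rpow_rpow_inv hS0 hθ0.ne',
        ← Real.rpow_mul (by norm_num : (0:ℝ) ≤ 2), ← one_div] at h4
    have hfin : p * (1/θ) = (n:ℝ)*p/((n:ℝ)-s*p) := by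
      rw [hθdef]
      field_simp
    rwa [hfin] at h3
end

section
/- Let n ≥ 1 be an integer and β < n (β ∈ ℝ, possibly negative). Then there exists a constant C depending only on n and β (in particular independent of Ω) such that for every open convex set Ω ⊂ ℝ^{n+1}: ∫_{∂Ω ∩ B_1(0)} |x|^{−β} dℋ^n(x) ≤ C, where B_1(0) is the open unit ball of ℝ^{n+1} centered at the origin. -/
open MeasureTheory Metric
open scoped ENNReal NNReal
open Set Filter
open scoped RealInnerProductSpace Topology

variable {E : Type*} [NormedAddCommGroup E] [InnerProductSpace ℝ E] [CompleteSpace E]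

/-- Nearest-point projection onto a nonempty closed convex set, with its key properties. -/
theorem exists_convex_proj (K : Set E) (hne : K.Nonempty) (hc : IsClosed K) (hv : Convex ℝ K) :
    ∃ p : E → E, (∀ u, p u ∈ K) ∧ (∀ u, ∀ w ∈ K, ⟪u - p u, w - p u⟫ ≤ 0) ∧
      LipschitzWith 1 p ∧ (∀ z y, y ∈ K → (∀ w ∈ K, ⟪z - y, w - y⟫ ≤ 0) → p z = y) := by
  have hmin : ∀ u : E, ∃ v ∈ K, ‖u - v‖ = ⨅ w : K, ‖u - w‖ :=
    exists_norm_eq_iInf_of_complete_convex hne hc.isComplete hv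
  choose p hpK hpmin using hmin
  have hchar : ∀ u, ∀ w ∈ K, ⟪u - p u, w - p u⟫ ≤ 0 := fun u =>
    (norm_eq_iInf_iff_real_inner_le_zero hv (hpK u)).1 (hpmin u)
  have huniq : ∀ z y, y ∈ K → (∀ w ∈ K, ⟪z - y, w - y⟫ ≤ 0) → p z = y := by
    intro z y hy hyv
    have h1 : ⟪z - p z, y - p z⟫ ≤ 0 := hchar z y hy
    have h2 : ⟪z - y, p z - y⟫ ≤ 0 := hyv _ (hpK z)
    have key : ‖y - p z‖ ^ 2 = ⟪z - p z, y - p z⟫ + ⟪z - y, p z - y⟫ := by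
      have h4 : (z - p z) - (z - y) = y - p z := by abel
      calc ‖y - p z‖ ^ 2 = ⟪y - p z, y - p z⟫ := (real_inner_self_eq_norm_sq _).symm
        _ = ⟪z - p z, y - p z⟫ - ⟪z - y, y - p z⟫ := by rw [← inner_sub_left, h4]
        _ = ⟪z - p z, y - p z⟫ + ⟪z - y, p z - y⟫ := by
            rw [show p z - y = -(y - p z) by abel, inner_neg_right]; ring
    have h0 : ‖y - p z‖ ^ 2 = 0 := le_antisymm (by linarith) (sq_nonneg _)
    have : y - p z = 0 := norm_eq_zero.mp (by
      have := sq_eq_zero_iff.mp h0; exact this)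
    exact (sub_eq_zero.mp this).symm
  refine ⟨p, hpK, hchar, ?_, huniq⟩
  refine LipschitzWith.of_dist_le_mul fun u₁ u₂ => ?_
  have h1 : ⟪u₁ - p u₁, p u₂ - p u₁⟫ ≤ 0 := hchar u₁ _ (hpK u₂)
  have h2 : ⟪u₂ - p u₂, p u₁ - p u₂⟫ ≤ 0 := hchar u₂ _ (hpK u₁)
  have key : ‖p u₁ - p u₂‖ ^ 2
      = ⟪u₁ - u₂, p u₁ - p u₂⟫ + ⟪u₁ - p u₁, p u₂ - p u₁⟫ + ⟪u₂ - p u₂, p u₁ - p u₂⟫ := by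
    have e1 : ⟪u₁ - p u₁, p u₂ - p u₁⟫ = -⟪u₁ - p u₁, p u₁ - p u₂⟫ := by
      rw [show p u₂ - p u₁ = -(p u₁ - p u₂) by abel, inner_neg_right]
    rw [e1]
    have e2 : ⟪u₁ - u₂, p u₁ - p u₂⟫ - ⟪u₁ - p u₁, p u₁ - p u₂⟫ + ⟪u₂ - p u₂, p u₁ - p u₂⟫
        = ⟪(u₁ - u₂) - (u₁ - p u₁) + (u₂ - p u₂), p u₁ - p u₂⟫ := by
      simp only [inner_add_left, inner_sub_left]
    have e3 : (u₁ - u₂) - (u₁ - p u₁) + (u₂ - p u₂) = p u₁ - p u₂ := by abel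
    calc ‖p u₁ - p u₂‖ ^ 2 = ⟪p u₁ - p u₂, p u₁ - p u₂⟫ := (real_inner_self_eq_norm_sq _).symm
      _ = ⟪(u₁ - u₂) - (u₁ - p u₁) + (u₂ - p u₂), p u₁ - p u₂⟫ := by rw [e3]
      _ = ⟪u₁ - u₂, p u₁ - p u₂⟫ - ⟪u₁ - p u₁, p u₁ - p u₂⟫ + ⟪u₂ - p u₂, p u₁ - p u₂⟫ := e2.symm
      _ = _ := by ring
  have hcs : ⟪u₁ - u₂, p u₁ - p u₂⟫ ≤ ‖u₁ - u₂‖ * ‖p u₁ - p u₂‖ := real_inner_le_norm _ _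
  have hle : ‖p u₁ - p u₂‖ ^ 2 ≤ ‖u₁ - u₂‖ * ‖p u₁ - p u₂‖ := by linarith
  rw [dist_eq_norm, dist_eq_norm, NNReal.coe_one, one_mul]
  nlinarith [norm_nonneg (p u₁ - p u₂), norm_nonneg (u₁ - u₂)]

variable {E : Type*} [NormedAddCommGroup E] [InnerProductSpace ℝ E] [FiniteDimensional ℝ E]

theorem exists_support_vector {K : Set E} (hc : IsClosed K) (hv : Convex ℝ K) {y : E}
    (hy : y ∈ frontier K) : ∃ u : E, ‖u‖ = 1 ∧ ∀ w ∈ K, ⟪u, w - y⟫ ≤ 0 := by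
  have hyK : y ∈ K := hc.frontier_subset hy
  have hyc : y ∈ closure Kᶜ := by
    rw [frontier_eq_closure_inter_closure] at hy; exact hy.2
  obtain ⟨z, hz, hzy⟩ := mem_closure_iff_seq_limit.mp hyc
  have hsep : ∀ m : ℕ, ∃ u : E, ‖u‖ = 1 ∧ ∀ w ∈ K, ⟪u, w⟫ < ⟪u, z m⟫ := by
    intro m
    obtain ⟨f, c, hfc, hcz⟩ := geometric_hahn_banach_closed_point hv hc (hz m)
    set w : E := (InnerProductSpace.toDual ℝ E).symm f with hw
    have hwf : ∀ x : E, ⟪w, x⟫ = f x := fun x => InnerProductSpace.toDual_symm_apply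
    have hwne : w ≠ 0 := by
      intro h
      have h1 : f y < c := hfc y hyK
      have h2 : (0:ℝ) = f y := by rw [← hwf, h, inner_zero_left]
      have h3 : (0:ℝ) = f (z m) := by rw [← hwf, h, inner_zero_left]
      linarith
    refine ⟨‖w‖⁻¹ • w, ?_, ?_⟩
    · rw [norm_smul, norm_inv, norm_norm, inv_mul_cancel₀ (norm_ne_zero_iff.mpr hwne)]
    · intro x hx
      have hpos : (0:ℝ) < ‖w‖⁻¹ := inv_pos.mpr (norm_pos_iff.mpr hwne)
      rw [real_inner_smul_left, real_inner_smul_left]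
      have : f x < f (z m) := lt_trans (hfc x hx) hcz
      rw [hwf, hwf]
      exact (mul_lt_mul_iff_right₀ hpos).mpr this
  choose u hu1 hu2 using hsep
  have husph : ∀ m, u m ∈ sphere (0:E) 1 := by
    intro m; rw [mem_sphere_zero_iff_norm]; exact hu1 m
  obtain ⟨v, hvs, φ, hφ, hvt⟩ := (isCompact_sphere (0:E) 1).tendsto_subseq husph
  refine ⟨v, mem_sphere_zero_iff_norm.mp hvs, ?_⟩
  intro w hw
  rw [inner_sub_right, sub_nonpos]
  have hl : Tendsto (fun m => ⟪u (φ m), w⟫) atTop (𝓝 ⟪v, w⟫) :=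
    hvt.inner tendsto_const_nhds
  have hr : Tendsto (fun m => ⟪u (φ m), z (φ m)⟫) atTop (𝓝 ⟪v, y⟫) :=
    hvt.inner (hzy.comp hφ.tendsto_atTop)
  exact le_of_tendsto_of_tendsto' hl hr fun m => (hu2 (φ m) w hw).le

variable {n : ℕ}

noncomputable def faceMap (i : Fin (n+1)) (c : ℝ) :
    EuclideanSpace ℝ (Fin n) → EuclideanSpace ℝ (Fin (n+1)) :=
  fun w => WithLp.toLp 2 (i.insertNth c (WithLp.ofLp w) : Fin (n+1) → ℝ)

theorem faceMap_isometry (i : Fin (n+1)) (c : ℝ) : Isometry (faceMap (n := n) i c) := by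
  intro w w'
  rw [EuclideanSpace.edist_eq, EuclideanSpace.edist_eq]
  congr 1
  rw [Fin.sum_univ_succAbove _ i]
  simp [faceMap, Fin.insertNth_apply_same, Fin.insertNth_apply_succAbove]

theorem face_subset (i : Fin (n+1)) (c : ℝ) (R : ℝ) (hR : 0 ≤ R) (hc : |c| ≤ R) :
    {x : EuclideanSpace ℝ (Fin (n+1)) | x i = c ∧ ∀ j, |x j| ≤ R}
      ⊆ faceMap i c '' (closedBall 0 (R * (n+1))) := by
  intro x ⟨hxi, hxj⟩
  refine ⟨WithLp.toLp 2 (fun j => x (i.succAbove j)), ?_, ?_⟩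
  · rw [mem_closedBall_zero_iff, EuclideanSpace.norm_eq]
    have : ∀ j : Fin n, ‖x (i.succAbove j)‖ ^ 2 ≤ R ^ 2 := fun j => by
      have := hxj (i.succAbove j)
      rw [Real.norm_eq_abs]
      nlinarith [abs_nonneg (x (i.succAbove j))]
    calc √(∑ j, ‖x (i.succAbove j)‖ ^ 2) ≤ √(∑ _j : Fin n, R ^ 2) :=
          Real.sqrt_le_sqrt (Finset.sum_le_sum fun j _ => this j)
      _ = √((n : ℝ) * R ^ 2) := by rw [Finset.sum_const, Finset.card_univ]; simp [mul_comm]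
      _ ≤ R * (n+1) := by
          rw [show (n:ℝ) * R ^ 2 = (R * (n:ℝ)) * R by ring]
          calc √((R * n) * R) ≤ √((R * (n+1)) * (R * (n+1))) := by
                apply Real.sqrt_le_sqrt; nlinarith [sq_nonneg R]
            _ = R * (n+1) := Real.sqrt_mul_self (by positivity)
  · ext j
    rcases eq_or_ne j i with h | h
    · subst h; simpa [faceMap] using hxi.symm
    · obtain ⟨k, rfl⟩ := Fin.exists_succAbove_eq h
      simp [faceMap]

theorem face_measure_le (i : Fin (n+1)) (c : ℝ) (R : ℝ) (hR : 0 ≤ R) (hc : |c| ≤ R) :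
    μH[(n:ℝ)] {x : EuclideanSpace ℝ (Fin (n+1)) | x i = c ∧ ∀ j, |x j| ≤ R}
      ≤ ENNReal.ofReal ((R * (n+1)) ^ n) *
        μH[(n:ℝ)] (ball (0 : EuclideanSpace ℝ (Fin n)) 1) := by
  have h1 := measure_mono (μ := μH[(n:ℝ)]) (face_subset i c R hR hc)
  have h2 : μH[(n:ℝ)] (faceMap i c '' closedBall 0 (R * (n+1)))
      = μH[(n:ℝ)] (closedBall (0 : EuclideanSpace ℝ (Fin n)) (R * (n+1))) :=
    (faceMap_isometry i c).hausdorffMeasure_image (Or.inl (Nat.cast_nonneg n)) _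
  have hE : (μH[(n:ℝ)] : Measure (EuclideanSpace ℝ (Fin n)))
      = μH[(Module.finrank ℝ (EuclideanSpace ℝ (Fin n)) : ℝ)] := by
    rw [finrank_euclideanSpace_fin]
  have h3 : μH[(n:ℝ)] (closedBall (0 : EuclideanSpace ℝ (Fin n)) (R * (n+1)))
      = ENNReal.ofReal ((R * (n+1)) ^ n) *
        μH[(n:ℝ)] (ball (0 : EuclideanSpace ℝ (Fin n)) 1) := by
    rw [hE, Measure.addHaar_closedBall _ _ (by positivity), finrank_euclideanSpace_fin]
  calc μH[(n:ℝ)] {x : EuclideanSpace ℝ (Fin (n+1)) | x i = c ∧ ∀ j, |x j| ≤ R}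
      ≤ _ := h1
    _ = _ := h2
    _ = _ := h3

theorem cubeS_measure (R : ℝ) (hR : 0 ≤ R) :
    μH[(n:ℝ)] {x : EuclideanSpace ℝ (Fin (n+1)) | (∀ j, |x j| ≤ R) ∧ ∃ i, |x i| = R}
      ≤ (2*(n+1)) * ENNReal.ofReal ((R * (n+1)) ^ n) *
        μH[(n:ℝ)] (ball (0 : EuclideanSpace ℝ (Fin n)) 1) := by
  set B := ENNReal.ofReal ((R * (n+1)) ^ n) *
        μH[(n:ℝ)] (ball (0 : EuclideanSpace ℝ (Fin n)) 1) with hB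
  have hsub : {x : EuclideanSpace ℝ (Fin (n+1)) | (∀ j, |x j| ≤ R) ∧ ∃ i, |x i| = R}
      ⊆ ⋃ i, ({x | x i = R ∧ ∀ j, |x j| ≤ R} ∪ {x | x i = -R ∧ ∀ j, |x j| ≤ R}) := by
    rintro x ⟨hall, i, hi⟩
    rcases abs_eq hR |>.mp hi with h | h
    · exact Set.mem_iUnion.mpr ⟨i, Or.inl ⟨h, hall⟩⟩
    · exact Set.mem_iUnion.mpr ⟨i, Or.inr ⟨h, hall⟩⟩
  calc μH[(n:ℝ)] {x : EuclideanSpace ℝ (Fin (n+1)) | (∀ j, |x j| ≤ R) ∧ ∃ i, |x i| = R}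
      ≤ ∑ i : Fin (n+1), μH[(n:ℝ)]
          ({x : EuclideanSpace ℝ (Fin (n+1)) | x i = R ∧ ∀ j, |x j| ≤ R}
            ∪ {x | x i = -R ∧ ∀ j, |x j| ≤ R}) :=
        (measure_mono hsub).trans (measure_iUnion_fintype_le _ _)
    _ ≤ ∑ _i : Fin (n+1), (B + B) := by
        refine Finset.sum_le_sum fun i _ => ?_
        refine (measure_union_le _ _).trans (add_le_add ?_ ?_)
        · exact face_measure_le i R R hR (by rw [abs_of_nonneg hR])
        · exact face_measure_le i (-R) R hR (by rw [abs_neg, abs_of_nonneg hR])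
    _ = (2*(n+1)) * B := by
        rw [Finset.sum_const, Finset.card_univ, Fintype.card_fin, nsmul_eq_mul]
        push_cast; ring
    _ = 2*(n+1) * ENNReal.ofReal ((R * (n+1)) ^ n) *
        μH[(n:ℝ)] (ball (0 : EuclideanSpace ℝ (Fin n)) 1) := by rw [hB]; ring

variable {n : ℕ}

theorem coord_abs_le_norm (x : EuclideanSpace ℝ (Fin (n+1))) (i : Fin (n+1)) : |x i| ≤ ‖x‖ := by
  rw [EuclideanSpace.norm_eq]
  have h1 : |x i| = √(‖x i‖ ^ 2) := by
    rw [Real.sqrt_sq_eq_abs, Real.norm_eq_abs, abs_abs]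
  rw [h1]
  apply Real.sqrt_le_sqrt
  exact Finset.single_le_sum (f := fun j => ‖x j‖ ^ 2) (fun j _ => sq_nonneg _)
    (Finset.mem_univ i)

theorem exists_coord_ne_zero {u : EuclideanSpace ℝ (Fin (n+1))} (hu : u ≠ 0) :
    ∃ i, u i ≠ 0 := by
  by_contra h
  push_neg at h
  exact hu (by ext i; exact h i)

/-- interior of closure of an open convex set is itself -/
theorem IsOpen.convex_interior_closure {E : Type*} [NormedAddCommGroup E] [NormedSpace ℝ E]
    {Ω : Set E} (hΩo : IsOpen Ω) (hΩv : Convex ℝ Ω) {a : E} (ha : a ∈ Ω) {x : E}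
    (hx : x ∈ interior (closure Ω)) : x ∈ Ω := by
  obtain ⟨δ, hδ, hball⟩ := Metric.isOpen_iff.mp isOpen_interior x hx
  have hδ' : ball x δ ⊆ closure Ω := hball.trans interior_subset
  set t : ℝ := δ / (2 * (‖x - a‖ + 1)) with ht
  have htpos : 0 < t := by positivity
  set y : E := x + t • (x - a) with hy
  have hyball : y ∈ ball x δ := by
    rw [mem_ball, dist_eq_norm]
    have : y - x = t • (x - a) := by rw [hy]; abel
    rw [this, norm_smul, Real.norm_eq_abs, abs_of_pos htpos]
    calc t * ‖x - a‖ < t * (2 * (‖x - a‖ + 1)) := by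
          apply mul_lt_mul_of_pos_left _ htpos
          nlinarith [norm_nonneg (x - a)]
      _ = δ := by rw [ht]; field_simp
  have hyc : y ∈ closure Ω := hδ' hyball
  have hcombo : (t / (1 + t)) • a + (1 / (1 + t)) • y = x := by
    rw [hy]
    match_scalars <;> field_simp <;> ring
  have h1t : (1:ℝ) + t ≠ 0 := by positivity
  have := hΩv.combo_interior_closure_mem_interior (a := t/(1+t)) (b := 1/(1+t))
    (by rwa [hΩo.interior_eq]) hyc (by positivity) (by positivity) (by field_simp; ring)
  rw [hcombo, hΩo.interior_eq] at this
  exact this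

theorem frontier_inter_ball_measure_le {n : ℕ} (r : ℝ) (hr : 0 < r)
    (Ω : Set (EuclideanSpace ℝ (Fin (n+1)))) (hΩo : IsOpen Ω) (hΩv : Convex ℝ Ω) :
    μH[(n:ℝ)] (frontier Ω ∩ ball 0 r)
      ≤ (2*(n+1)) * ENNReal.ofReal ((2*r * (n+1)) ^ n) *
        μH[(n:ℝ)] (ball (0 : EuclideanSpace ℝ (Fin n)) 1) := by
  rcases (frontier Ω ∩ ball (0 : EuclideanSpace ℝ (Fin (n+1))) r).eq_empty_or_nonempty with
    he | ⟨x₀, hx₀⟩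
  · rw [he, measure_empty]; exact zero_le
  have hΩne : Ω.Nonempty := by
    by_contra h
    rw [not_nonempty_iff_eq_empty] at h
    subst h
    simp [frontier_empty] at hx₀
  obtain ⟨a, ha⟩ := hΩne
  set K := closure Ω ∩ closedBall (0 : EuclideanSpace ℝ (Fin (n+1))) r with hK
  have hKc : IsClosed K := isClosed_closure.inter Metric.isClosed_closedBall
  have hKv : Convex ℝ K := hΩv.closure.inter (convex_closedBall _ _)
  have hKne : K.Nonempty :=
    ⟨x₀, frontier_subset_closure hx₀.1, ball_subset_closedBall hx₀.2⟩
  obtain ⟨p, hpK, hpchar, hplip, hpuniq⟩ := exists_convex_proj K hKne hKc hKv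
  have hsub : frontier Ω ∩ ball (0 : EuclideanSpace ℝ (Fin (n+1))) r ⊆ frontier K := by
    rintro x ⟨hxf, hxb⟩
    have hxK : x ∈ K := ⟨frontier_subset_closure hxf, ball_subset_closedBall hxb⟩
    have hxint : x ∉ Ω := by
      intro hxΩ
      exact hxf.2 (by rwa [hΩo.interior_eq])
    refine ⟨subset_closure hxK, fun hxi => ?_⟩
    exact hxint (IsOpen.convex_interior_closure hΩo hΩv ha
      (interior_mono inter_subset_left hxi))
  have hcube : frontier K ⊆ p ''
      {x : EuclideanSpace ℝ (Fin (n+1)) | (∀ j, |x j| ≤ 2*r) ∧ ∃ i, |x i| = 2*r} := by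
    intro y hy
    have hyK : y ∈ K := hKc.frontier_subset hy
    have hynorm : ‖y‖ ≤ r := mem_closedBall_zero_iff.mp hyK.2
    obtain ⟨u, hu1, hu2⟩ := exists_support_vector hKc hKv hy
    have hune : u ≠ 0 := by
      intro h; rw [h, norm_zero] at hu1; exact one_ne_zero hu1.symm
    obtain ⟨i₀, hi₀⟩ := exists_coord_ne_zero hune
    set g : ℝ → ℝ :=
      fun s => Finset.univ.sup' Finset.univ_nonempty (fun i => |y i + s * u i|) with hgdef
    have hgc : Continuous g := by
      rw [continuous_iff_continuousAt]
      intro s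
      exact ContinuousAt.finset_sup'_apply Finset.univ_nonempty fun i _ =>
        ((continuous_const.add (continuous_id.mul continuous_const)).abs).continuousAt
    have hg0 : g 0 ≤ 2*r := by
      apply Finset.sup'_le
      intro i _
      simp only [zero_mul, add_zero]
      linarith [coord_abs_le_norm y i]
    set s₁ : ℝ := (2*r + ‖y‖ + 1)/|u i₀| with hs₁def
    have hui₀ : 0 < |u i₀| := abs_pos.mpr hi₀
    have hs₁ : 0 ≤ s₁ := by positivity
    have hgs₁ : 2*r ≤ g s₁ := by
      have habs : |s₁ * u i₀| ≤ |y i₀ + s₁ * u i₀| + |y i₀| := by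
        have := abs_add_le (y i₀ + s₁ * u i₀) (-(y i₀))
        simpa using this
      have h2 : s₁ * |u i₀| = 2*r + ‖y‖ + 1 := by
        rw [hs₁def]; field_simp
      have h3 : |y i₀| ≤ ‖y‖ := coord_abs_le_norm y i₀
      have h4 : |y i₀ + s₁ * u i₀| ≤ g s₁ :=
        Finset.le_sup' (fun i => |y i + s₁ * u i|) (Finset.mem_univ i₀)
      have h5 : |s₁ * u i₀| = s₁ * |u i₀| := by rw [abs_mul, abs_of_nonneg hs₁]
      linarith
    obtain ⟨s, hsmem, hgs⟩ : ∃ s ∈ Icc 0 s₁, g s = 2*r :=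
      intermediate_value_Icc hs₁ hgc.continuousOn ⟨hg0, hgs₁⟩
    set z : EuclideanSpace ℝ (Fin (n+1)) := y + s • u with hzdef
    have hz : ∀ j, z j = y j + s * u j := fun j => rfl
    refine ⟨z, ⟨?_, ?_⟩, ?_⟩
    · intro j
      rw [hz]
      calc |y j + s * u j| ≤ g s := Finset.le_sup' (fun i => |y i + s * u i|) (Finset.mem_univ j)
        _ = 2*r := hgs
    · obtain ⟨i, _, hi⟩ := Finset.exists_mem_eq_sup' (Finset.univ_nonempty)
        (fun i => |y i + s * u i|)
      exact ⟨i, by rw [hz]; exact (hi.symm.trans hgs)⟩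
    · refine hpuniq z y hyK fun w hw => ?_
      have hzy : z - y = s • u := by rw [hzdef]; abel
      rw [hzy, real_inner_smul_left]
      have := mul_le_mul_of_nonneg_left (hu2 w hw) hsmem.1
      simpa using this
  calc μH[(n:ℝ)] (frontier Ω ∩ ball (0 : EuclideanSpace ℝ (Fin (n+1))) r)
      ≤ μH[(n:ℝ)] (p '' {x : EuclideanSpace ℝ (Fin (n+1)) |
          (∀ j, |x j| ≤ 2*r) ∧ ∃ i, |x i| = 2*r}) := measure_mono (hsub.trans hcube)
    _ ≤ ((1:ℝ≥0) : ℝ≥0∞) ^ (n:ℝ) * μH[(n:ℝ)] {x : EuclideanSpace ℝ (Fin (n+1)) |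
          (∀ j, |x j| ≤ 2*r) ∧ ∃ i, |x i| = 2*r} :=
        hplip.hausdorffMeasure_image_le (Nat.cast_nonneg n) _
    _ = μH[(n:ℝ)] {x : EuclideanSpace ℝ (Fin (n+1)) |
          (∀ j, |x j| ≤ 2*r) ∧ ∃ i, |x i| = 2*r} := by simp
    _ ≤ (2*(n+1)) * ENNReal.ofReal ((2*r * (n+1)) ^ n) *
        μH[(n:ℝ)] (ball (0 : EuclideanSpace ℝ (Fin n)) 1) := cubeS_measure (2*r) (by positivity)

/-- Universal bound for `∫_{∂Ω ∩ B_1(0)} |x|^{-β} dℋ^n` over boundaries of open convex sets,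
when `β < n` (possibly negative). -/
theorem weighted_integral_inside_ball_on_convex_boundaries
    (n : ℕ) (hn : 1 ≤ n) (β : ℝ) (hβ : β < (n:ℝ)) :
    ∃ C : ℝ≥0, ∀ (Ω : Set (EuclideanSpace ℝ (Fin (n+1)))), IsOpen Ω → Convex ℝ Ω →
      (∫⁻ x in frontier Ω ∩ Metric.ball (0 : EuclideanSpace ℝ (Fin (n+1))) 1,
          (‖x‖₊ : ℝ≥0∞) ^ (-β) ∂μH[(n:ℝ)]) ≤ (C : ℝ≥0∞) := by
  classical
  set m : ℝ := max β 0 with hm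
  have hm0 : 0 ≤ m := le_max_right _ _
  have hmn : m < (n:ℝ) := max_lt hβ (by exact_mod_cast hn)
  -- basic constants
  set a : ℝ≥0∞ := (2:ℝ≥0∞) ^ m with ha
  set D : ℝ≥0∞ := (2*(n+1)) * ENNReal.ofReal ((2*(n+1):ℝ)^n) *
      μH[(n:ℝ)] (ball (0 : EuclideanSpace ℝ (Fin n)) 1) with hD
  set τ : ℝ≥0∞ := ENNReal.ofReal ((2⁻¹:ℝ) ^ n) with hτ
  set w : ℝ≥0∞ := a * τ with hw
  -- D is finite
  have hμball : μH[(n:ℝ)] (ball (0 : EuclideanSpace ℝ (Fin n)) 1) ≠ ∞ := by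
    have hE : (μH[(n:ℝ)] : Measure (EuclideanSpace ℝ (Fin n)))
        = μH[(Module.finrank ℝ (EuclideanSpace ℝ (Fin n)) : ℝ)] := by
      rw [finrank_euclideanSpace_fin]
    have hcb : μH[(n:ℝ)] (closedBall (0 : EuclideanSpace ℝ (Fin n)) 1) < ∞ := by
      rw [hE]
      exact (isCompact_closedBall _ _).measure_lt_top
    exact ne_top_of_le_ne_top hcb.ne (measure_mono ball_subset_closedBall)
  have hDfin : D ≠ ∞ := by
    rw [hD]
    refine ENNReal.mul_ne_top (ENNReal.mul_ne_top ?_ ENNReal.ofReal_ne_top) hμball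
    exact ENNReal.mul_ne_top (by norm_num)
      (ENNReal.add_ne_top.mpr ⟨ENNReal.natCast_ne_top n, ENNReal.one_ne_top⟩)
  have hafin : a ≠ ∞ := by
    rw [ha]; exact ENNReal.rpow_ne_top_of_nonneg hm0 (by simp)
  -- w < 1
  have hτeq : τ = ((2:ℝ≥0∞) ^ (n:ℝ))⁻¹ := by
    rw [hτ, ENNReal.ofReal_pow (by norm_num), ENNReal.ofReal_inv_of_pos (by norm_num)]
    rw [← ENNReal.inv_pow, ENNReal.rpow_natCast]
    norm_num
  have hwlt : w < 1 := by
    rw [hw, ha, hτeq, ← ENNReal.rpow_neg, ← ENNReal.rpow_add _ _ (by norm_num) (by norm_num)]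
    exact ENNReal.rpow_lt_one_of_one_lt_of_neg (by norm_num) (by linarith)
  set Dtot : ℝ≥0∞ := (a * D) * (1 - w)⁻¹ with hDtot
  have hDtotfin : Dtot ≠ ∞ := by
    rw [hDtot]
    apply ENNReal.mul_ne_top (ENNReal.mul_ne_top hafin hDfin)
    rw [Ne, ENNReal.inv_eq_top, tsub_eq_zero_iff_le]
    exact fun h => absurd (lt_of_lt_of_le hwlt h) (lt_irrefl _)
  refine ⟨Dtot.toNNReal, ?_⟩
  intro Ω hΩo hΩv
  rw [ENNReal.coe_toNNReal hDtotfin]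
  -- annuli
  set Ann : ℕ → Set (EuclideanSpace ℝ (Fin (n+1))) :=
    fun k => {x | (2⁻¹:ℝ)^(k+1) ≤ ‖x‖ ∧ ‖x‖ < (2⁻¹:ℝ)^k} with hAnn
  set T : ℕ → Set (EuclideanSpace ℝ (Fin (n+1))) := fun k => frontier Ω ∩ Ann k with hT
  have hTmeas : ∀ k, MeasurableSet (T k) := by
    intro k
    apply (isClosed_frontier).measurableSet.inter
    exact ((isClosed_le continuous_const continuous_norm).measurableSet).inter
      ((isOpen_lt continuous_norm continuous_const)).measurableSet
  -- cover
  have hcover : frontier Ω ∩ ball (0 : EuclideanSpace ℝ (Fin (n+1))) 1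
      ⊆ {0} ∪ ⋃ k, T k := by
    rintro x ⟨hxf, hxb⟩
    rw [mem_ball_zero_iff] at hxb
    by_cases hx0 : x = 0
    · exact Or.inl (by simp [hx0])
    · have hxpos : 0 < ‖x‖ := norm_pos_iff.mpr hx0
      have hex : ∃ k : ℕ, (2⁻¹:ℝ)^(k+1) ≤ ‖x‖ := by
        obtain ⟨j, hj⟩ := exists_pow_lt_of_lt_one hxpos (by norm_num : (2⁻¹:ℝ) < 1)
        exact ⟨j, le_of_lt (lt_of_le_of_lt
          (pow_le_pow_of_le_one (by norm_num) (by norm_num) (Nat.le_succ j)) hj)⟩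
      set k₀ := Nat.find hex with hk₀
      refine Or.inr (Set.mem_iUnion.mpr ⟨k₀, hxf, Nat.find_spec hex, ?_⟩)
      rcases Nat.eq_zero_or_pos k₀ with h0 | hpos
      · rw [h0]; simpa using hxb
      · by_contra hcon
        push_neg at hcon
        have := Nat.find_min hex (m := k₀ - 1) (by omega)
        rw [show k₀ - 1 + 1 = k₀ by omega] at this
        exact this hcon
  -- integrand bound on each annulus
  have hf : ∀ k : ℕ, ∀ x ∈ T k, (‖x‖₊ : ℝ≥0∞) ^ (-β) ≤ a ^ (k+1) := by
    intro k x hx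
    obtain ⟨-, hx1, hx2⟩ := hx
    have hq : ((2:ℝ≥0∞) ^ (k+1 : ℕ))⁻¹ ≤ (‖x‖₊ : ℝ≥0∞) := by
      have h1 : ENNReal.ofReal ((2⁻¹:ℝ)^(k+1)) ≤ ENNReal.ofReal ‖x‖ :=
        ENNReal.ofReal_le_ofReal hx1
      rw [ofReal_norm] at h1
      refine le_trans (le_of_eq ?_) h1
      rw [ENNReal.ofReal_pow (by norm_num), ENNReal.ofReal_inv_of_pos (by norm_num),
        ← ENNReal.inv_pow]
      norm_num
    have hle1 : (‖x‖₊ : ℝ≥0∞) ≤ 1 := by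
      have h2 : ‖x‖ ≤ 1 := by
        calc ‖x‖ ≤ (2⁻¹:ℝ)^k := hx2.le
          _ ≤ 1 := pow_le_one₀ (by norm_num) (by norm_num)
      have := ENNReal.ofReal_le_ofReal h2
      rwa [ofReal_norm, ENNReal.ofReal_one] at this
    have hgoal : (‖x‖₊ : ℝ≥0∞) ^ (-β) ≤ ((2:ℝ≥0∞) ^ (k+1 : ℕ)) ^ m := by
      rcases le_or_gt β 0 with hβ0 | hβ0
      · have hmeq : m = 0 := max_eq_right hβ0
        rw [hmeq, ENNReal.rpow_zero]
        calc (‖x‖₊ : ℝ≥0∞) ^ (-β) ≤ (1:ℝ≥0∞) ^ (-β) :=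
              ENNReal.rpow_le_rpow hle1 (by linarith)
          _ = 1 := ENNReal.one_rpow _
      · have hmeq : m = β := max_eq_left hβ0.le
        rw [hmeq, ENNReal.rpow_neg, ← ENNReal.inv_rpow]
        refine ENNReal.rpow_le_rpow ?_ hβ0.le
        exact ENNReal.inv_le_iff_inv_le.mpr hq
    refine hgoal.trans (le_of_eq ?_)
    rw [ha, ← ENNReal.rpow_natCast (2:ℝ≥0∞) (k+1), ← ENNReal.rpow_mul,
      ← ENNReal.rpow_natCast ((2:ℝ≥0∞) ^ m) (k+1), ← ENNReal.rpow_mul]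
    ring_nf
  -- measure bound of each T k
  have hTmeasure : ∀ k : ℕ, μH[(n:ℝ)] (T k) ≤ D * τ ^ k := by
    intro k
    have hsub : T k ⊆ frontier Ω ∩ ball (0 : EuclideanSpace ℝ (Fin (n+1))) ((2⁻¹:ℝ)^k) := by
      rintro x ⟨hxf, _, hx2⟩
      exact ⟨hxf, mem_ball_zero_iff.mpr hx2⟩
    have hrpos : (0:ℝ) < (2⁻¹:ℝ)^k := by positivity
    have := frontier_inter_ball_measure_le ((2⁻¹:ℝ)^k) hrpos Ω hΩo hΩv
    refine (measure_mono hsub).trans (this.trans (le_of_eq ?_))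
    rw [hD, hτ]
    have hre : (2 * (2⁻¹:ℝ)^k * ((n:ℝ)+1))^n = (2*((n:ℝ)+1))^n * ((2⁻¹:ℝ)^n)^k := by
      rw [show (2 * (2⁻¹:ℝ)^k * ((n:ℝ)+1)) = (2*((n:ℝ)+1)) * (2⁻¹:ℝ)^k by ring, mul_pow,
        pow_right_comm]
    rw [hre, ENNReal.ofReal_mul (by positivity),
      ENNReal.ofReal_pow (p := (2⁻¹:ℝ)^n) (by positivity) k]
    ring
  -- singleton has measure zero
  have hsing : (∫⁻ x in ({0} : Set (EuclideanSpace ℝ (Fin (n+1)))),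
      (‖x‖₊ : ℝ≥0∞) ^ (-β) ∂μH[(n:ℝ)]) = 0 := by
    have hdim : dimH ({0} : Set (EuclideanSpace ℝ (Fin (n+1)))) < ((n:ℝ≥0) : ℝ≥0∞) := by
      rw [dimH_singleton]
      exact_mod_cast Nat.pos_of_ne_zero (by omega)
    have hμ0 : μH[((n:ℝ≥0):ℝ)] ({0} : Set (EuclideanSpace ℝ (Fin (n+1)))) = 0 :=
      hausdorffMeasure_of_dimH_lt hdim
    have hcast : ((n:ℝ≥0):ℝ) = (n:ℝ) := by norm_cast
    rw [hcast] at hμ0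
    rw [Measure.restrict_eq_zero.mpr hμ0, lintegral_zero_measure]
  -- main chain
  calc (∫⁻ x in frontier Ω ∩ Metric.ball (0 : EuclideanSpace ℝ (Fin (n+1))) 1,
          (‖x‖₊ : ℝ≥0∞) ^ (-β) ∂μH[(n:ℝ)])
      ≤ ∫⁻ x in ({0} ∪ ⋃ k, T k), (‖x‖₊ : ℝ≥0∞) ^ (-β) ∂μH[(n:ℝ)] :=
        lintegral_mono_set hcover
    _ ≤ (∫⁻ x in ({0} : Set (EuclideanSpace ℝ (Fin (n+1)))),
          (‖x‖₊ : ℝ≥0∞) ^ (-β) ∂μH[(n:ℝ)])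
        + ∫⁻ x in (⋃ k, T k), (‖x‖₊ : ℝ≥0∞) ^ (-β) ∂μH[(n:ℝ)] :=
        lintegral_union_le _ _ _
    _ ≤ 0 + ∑' k, ∫⁻ x in T k, (‖x‖₊ : ℝ≥0∞) ^ (-β) ∂μH[(n:ℝ)] := by
        rw [hsing]
        exact add_le_add le_rfl (lintegral_iUnion_le _ _)
    _ ≤ ∑' k : ℕ, (a * D) * w ^ k := by
        rw [zero_add]
        refine ENNReal.tsum_le_tsum fun k => ?_
        calc (∫⁻ x in T k, (‖x‖₊ : ℝ≥0∞) ^ (-β) ∂μH[(n:ℝ)])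
            ≤ ∫⁻ _x in T k, a ^ (k+1) ∂μH[(n:ℝ)] :=
              setLIntegral_mono' (hTmeas k) (hf k)
          _ = a ^ (k+1) * μH[(n:ℝ)] (T k) := setLIntegral_const _ _
          _ ≤ a ^ (k+1) * (D * τ ^ k) :=
              mul_le_mul_right (hTmeasure k) _
          _ = (a * D) * w ^ k := by rw [hw, pow_succ, mul_pow]; ring
    _ = Dtot := by
        rw [ENNReal.tsum_mul_left, ENNReal.tsum_geometric, hDtot]
end

section
/- Let n ≥ 1 be an integer and β ∈ [0, n). For every Lebesgue-measurable set E ⊂ ℝ^n of finite Lebesgue measure |E|, one has ∫_E |x|^{−β} dx ≤ ∫_{E*} |x|^{−β} dx = (n ω_n^{β/n} / (n−β)) · |E|^{(n−β)/n}, where E* is the open ball of ℝ^n centered at the origin with |E*| = |E| and ω_n is the Lebesgue measure of the unit ball of ℝ^n. -/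
open MeasureTheory Metric
open scoped ENNReal NNReal

section Aux

open Set

private lemma euclid_nontrivial (n : ℕ) (hn : 1 ≤ n) :
    Nontrivial (EuclideanSpace ℝ (Fin n)) := by
  have : Nonempty (Fin n) := ⟨⟨0, hn⟩⟩
  infer_instance

private lemma vol_ball_eq (n : ℕ) (hn : 1 ≤ n) {s : ℝ} (hs : 0 ≤ s) :
    volume (ball (0 : EuclideanSpace ℝ (Fin n)) s)
      = ENNReal.ofReal (s ^ n) * volume (ball (0 : EuclideanSpace ℝ (Fin n)) 1) := by
  haveI := euclid_nontrivial n hn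
  rw [Measure.addHaar_ball _ _ hs, finrank_euclideanSpace_fin]

/-- Layer cake: the superlevel sets of `‖x‖ ^ (-β)` are balls. -/
private lemma layercake_aux (n : ℕ) (hn : 1 ≤ n) {β : ℝ} (hβ : 0 < β)
    (S : Set (EuclideanSpace ℝ (Fin n))) (hS : MeasurableSet S) :
    (∫⁻ x in S, (‖x‖₊ : ℝ≥0∞) ^ (-β))
      = ∫⁻ t in Set.Ioi (0:ℝ),
          volume (S ∩ ball (0 : EuclideanSpace ℝ (Fin n)) (t ^ (-1/β))) := by
  haveI := euclid_nontrivial n hn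
  have h0 : volume ({(0 : EuclideanSpace ℝ (Fin n))} : Set _) = 0 := measure_singleton 0
  have hmble : Measurable (fun x : EuclideanSpace ℝ (Fin n) => ‖x‖ ^ (-β)) := by fun_prop
  have step1 : (∫⁻ x in S, (‖x‖₊ : ℝ≥0∞) ^ (-β))
      = ∫⁻ x in S, ENNReal.ofReal (‖x‖ ^ (-β)) := by
    apply lintegral_congr_ae
    have hne : ∀ᵐ x ∂(volume.restrict S), x ≠ (0 : EuclideanSpace ℝ (Fin n)) := by
      refine ae_iff.2 ?_
      have hs : {x : EuclideanSpace ℝ (Fin n) | ¬ x ≠ 0} = {0} := by ext x; simp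
      rw [hs, Measure.restrict_apply' hS]
      exact measure_mono_null Set.inter_subset_left h0
    filter_upwards [hne] with x hx
    rw [← ENNReal.ofReal_coe_nnreal, coe_nnnorm, ENNReal.ofReal_rpow_of_pos (norm_pos_iff.2 hx)]
  rw [step1, lintegral_eq_lintegral_meas_lt (volume.restrict S)
      (ae_of_all _ fun x => Real.rpow_nonneg (norm_nonneg x) _) hmble.aemeasurable]
  refine setLIntegral_congr_fun measurableSet_Ioi (fun t ht => ?_)
  have htpos : (0:ℝ) < t := ht
  have hrpos : 0 < t ^ (-1/β) := Real.rpow_pos_of_pos htpos _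
  have hz : -β < 0 := neg_lt_zero.2 hβ
  have key : (t ^ (-1/β)) ^ (-β) = t := by
    rw [← Real.rpow_mul htpos.le, show (-1/β) * (-β) = 1 by field_simp, Real.rpow_one]
  have hset : {x : EuclideanSpace ℝ (Fin n) | t < ‖x‖ ^ (-β)}
      = ball (0 : EuclideanSpace ℝ (Fin n)) (t ^ (-1/β)) \ {0} := by
    ext x
    simp only [Set.mem_setOf_eq, Set.mem_diff, mem_ball, dist_zero_right,
      Set.mem_singleton_iff]
    constructor
    · intro hx
      have hx0 : x ≠ 0 := by
        rintro rfl
        rw [norm_zero, Real.zero_rpow hz.ne] at hx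
        exact absurd hx (not_lt.2 htpos.le)
      have hnx : 0 < ‖x‖ := norm_pos_iff.2 hx0
      have hiff := Real.rpow_lt_rpow_iff_of_neg hrpos hnx hz
      rw [key] at hiff
      exact ⟨hiff.1 hx, hx0⟩
    · rintro ⟨hlt, hx0⟩
      have hnx : 0 < ‖x‖ := norm_pos_iff.2 hx0
      have hiff := Real.rpow_lt_rpow_iff_of_neg hrpos hnx hz
      rw [key] at hiff
      exact hiff.2 hlt
  rw [Measure.restrict_apply' hS, hset]
  have hss : (ball (0 : EuclideanSpace ℝ (Fin n)) (t ^ (-1/β)) \ {0}) ∩ S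
      = (S ∩ ball (0 : EuclideanSpace ℝ (Fin n)) (t ^ (-1/β))) \ {0} := by
    ext x
    simp only [Set.mem_inter_iff, Set.mem_diff, Set.mem_singleton_iff]
    tauto
  rw [hss, measure_diff_null h0]

private lemma alg_aux {nr β A B t W W1 W2 : ℝ} (hβ : 0 < β) (hβn : β < nr)
    (h1 : A * t = B) (h2 : W1 * W2 = W) :
    A * W * t + W * (-B / (-(nr/β) + 1)) = nr * W1 / (nr - β) * (B * W2) := by
  have hb : (0:ℝ) < nr - β := sub_pos.2 hβn
  have hd : 1 < nr/β := (one_lt_div hβ).2 hβn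
  have hne : -(nr/β) + 1 ≠ 0 := by
    have : -(nr/β) + 1 < 0 := by linarith
    exact this.ne
  have hb' : β - nr ≠ 0 := by linarith
  have hd1 : -(nr/β) + 1 = (β - nr)/β := by field_simp; ring
  rw [← h1, ← h2, hd1, div_div_eq_mul_div]
  field_simp
  ring

end Aux

/-- Rearrangement inequality in `ℝ^n`: for a measurable set `E` of finite measure and
`β ∈ [0,n)`, the integral `∫_E |x|^{-β} dx` is at most the corresponding integral over the
ball `E*` centered at the origin with `|E*| = |E|`, which equals
`(n ω_n^{β/n} / (n−β)) |E|^{(n−β)/n}`. -/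
theorem weighted_integral_le_schwarz_rearrangement
    (n : ℕ) (hn : 1 ≤ n) (β : ℝ) (hβ : β ∈ Set.Ico (0:ℝ) n)
    (E : Set (EuclideanSpace ℝ (Fin n))) (hE : MeasurableSet E) (hEfin : volume E < ⊤)
    (R : ℝ) (hR : 0 ≤ R)
    (hRE : volume (Metric.ball (0 : EuclideanSpace ℝ (Fin n)) R) = volume E) :
    (∫⁻ x in E, (‖x‖₊ : ℝ≥0∞) ^ (-β))
      ≤ (∫⁻ x in Metric.ball (0 : EuclideanSpace ℝ (Fin n)) R, (‖x‖₊ : ℝ≥0∞) ^ (-β)) ∧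
    (∫⁻ x in Metric.ball (0 : EuclideanSpace ℝ (Fin n)) R, (‖x‖₊ : ℝ≥0∞) ^ (-β))
      = ENNReal.ofReal
          ((n:ℝ) * (volume (Metric.ball (0 : EuclideanSpace ℝ (Fin n)) 1)).toReal ^ (β/(n:ℝ))
            / ((n:ℝ) - β) * (volume E).toReal ^ (((n:ℝ) - β)/(n:ℝ))) := by
  obtain ⟨hβ0, hβn⟩ := hβ
  haveI := euclid_nontrivial n hn
  have hn0 : (0:ℝ) < n := by exact_mod_cast Nat.pos_of_ne_zero (by omega)
  have hωpos : 0 < volume (ball (0 : EuclideanSpace ℝ (Fin n)) 1) :=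
    measure_ball_pos _ _ one_pos
  have hωfin : volume (ball (0 : EuclideanSpace ℝ (Fin n)) 1) ≠ ⊤ :=
    measure_ball_lt_top.ne
  rcases eq_or_lt_of_le hβ0 with hβ0' | hβpos
  · -- case β = 0
    subst hβ0'
    simp only [neg_zero, ENNReal.rpow_zero]
    rw [setLIntegral_one, setLIntegral_one, hRE]
    refine ⟨le_refl _, ?_⟩
    rw [zero_div, Real.rpow_zero, mul_one, sub_zero, div_self hn0.ne', Real.rpow_one,
      one_mul, ENNReal.ofReal_toReal hEfin.ne]
  · -- case 0 < β
    rcases eq_or_lt_of_le hR with hR0 | hRpos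
    · -- R = 0, so E is null
      have hE0 : volume E = 0 := by rw [← hRE, ← hR0, ball_zero, measure_empty]
      have hne : ((n:ℝ) - β)/(n:ℝ) ≠ 0 :=
        div_ne_zero (sub_pos.2 hβn).ne' hn0.ne'
      rw [← hR0, ball_zero]
      constructor
      · rw [setLIntegral_measure_zero _ _ hE0]
        exact zero_le
      · rw [hE0]
        simp [Real.zero_rpow hne]
    · -- main case : 0 < β, 0 < R
      have hz : -1/β < 0 := by
        rw [neg_div]
        exact neg_lt_zero.2 (by positivity)
      have hL := layercake_aux n hn hβpos E hE
      have hLB := layercake_aux n hn hβpos (ball (0 : EuclideanSpace ℝ (Fin n)) R)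
        measurableSet_ball
      set t0 : ℝ := R ^ (-β) with ht0
      have ht0pos : 0 < t0 := Real.rpow_pos_of_pos hRpos _
      have hkey : t0 ^ (-1/β) = R := by
        rw [ht0, ← Real.rpow_mul hR, show (-β) * (-1/β) = 1 by field_simp, Real.rpow_one]
      have hball_inter : ∀ t : ℝ, 0 < t →
          ball (0 : EuclideanSpace ℝ (Fin n)) R ∩ ball 0 (t ^ (-1/β))
            = ball 0 (min R (t ^ (-1/β))) := by
        intro t _; ext x; simp [mem_ball, lt_min_iff]
      constructor
      · -- the inequality
        rw [hL, hLB]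
        refine lintegral_mono_ae ((ae_restrict_iff' measurableSet_Ioi).2
          (ae_of_all _ fun t ht => ?_))
        have htpos : (0:ℝ) < t := ht
        rw [hball_inter t htpos]
        rcases le_total R (t ^ (-1/β)) with h | h
        · rw [min_eq_left h]
          calc volume (E ∩ ball (0 : EuclideanSpace ℝ (Fin n)) (t ^ (-1/β)))
              ≤ volume E := measure_mono Set.inter_subset_left
            _ = volume (ball (0 : EuclideanSpace ℝ (Fin n)) R) := hRE.symm
        · rw [min_eq_right h]
          exact measure_mono Set.inter_subset_right
      · -- the equality
        rw [hLB, show (Set.Ioi (0:ℝ)) = Set.Ioc 0 t0 ∪ Set.Ioi t0 from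
            (Set.Ioc_union_Ioi_eq_Ioi ht0pos.le).symm,
          lintegral_union measurableSet_Ioi (Set.Ioc_disjoint_Ioi le_rfl)]
        have hpiece1 :
            (∫⁻ t in Set.Ioc (0:ℝ) t0,
              volume (ball (0 : EuclideanSpace ℝ (Fin n)) R ∩ ball 0 (t ^ (-1/β))))
            = ENNReal.ofReal (R ^ n) * volume (ball (0 : EuclideanSpace ℝ (Fin n)) 1)
                * ENNReal.ofReal t0 := by
          rw [setLIntegral_congr_fun measurableSet_Ioc (fun t ht => ?_),
            setLIntegral_const, Real.volume_Ioc, sub_zero]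
          rw [hball_inter t ht.1, min_eq_left ?_, vol_ball_eq n hn hR]
          rw [← hkey]
          exact (Real.rpow_le_rpow_iff_of_neg ht0pos ht.1 hz).2 ht.2
        have hs : -((n:ℝ)/β) < -1 := by
          rw [neg_lt_neg_iff]
          exact (one_lt_div hβpos).2 hβn
        have hpiece2 :
            (∫⁻ t in Set.Ioi t0,
              volume (ball (0 : EuclideanSpace ℝ (Fin n)) R ∩ ball 0 (t ^ (-1/β))))
            = ENNReal.ofReal (-t0 ^ (-((n:ℝ)/β) + 1) / (-((n:ℝ)/β) + 1))
                * volume (ball (0 : EuclideanSpace ℝ (Fin n)) 1) := by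
          have h1 : ∀ t ∈ Set.Ioi t0,
              volume (ball (0 : EuclideanSpace ℝ (Fin n)) R ∩ ball 0 (t ^ (-1/β)))
                = ENNReal.ofReal (t ^ (-((n:ℝ)/β)))
                    * volume (ball (0 : EuclideanSpace ℝ (Fin n)) 1) := by
            intro t ht
            have htpos : 0 < t := ht0pos.trans ht
            have hrle : t ^ (-1/β) ≤ R := by
              rw [← hkey]
              exact (Real.rpow_le_rpow_iff_of_neg htpos ht0pos hz).2 (le_of_lt ht)
            rw [hball_inter t htpos, min_eq_right hrle,
              vol_ball_eq n hn (Real.rpow_pos_of_pos htpos _).le]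
            congr 2
            rw [← Real.rpow_natCast (t ^ (-1/β)) n, ← Real.rpow_mul htpos.le]
            congr 1
            field_simp
          rw [setLIntegral_congr_fun measurableSet_Ioi h1,
            lintegral_mul_const _ (by fun_prop),
            ← ofReal_integral_eq_lintegral_ofReal
              (integrableOn_Ioi_rpow_of_lt hs ht0pos)
              ((ae_restrict_iff' measurableSet_Ioi).2 (ae_of_all _ fun t ht =>
                Real.rpow_nonneg (le_of_lt (ht0pos.trans ht)) _)),
            integral_Ioi_rpow_of_lt hs ht0pos]
        rw [hpiece1, hpiece2]
        -- now pass to real arithmetic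
        set W : ℝ := (volume (ball (0 : EuclideanSpace ℝ (Fin n)) 1)).toReal with hW
        have hWpos : 0 < W := ENNReal.toReal_pos hωpos.ne' hωfin
        have hωW : volume (ball (0 : EuclideanSpace ℝ (Fin n)) 1) = ENNReal.ofReal W :=
          (ENNReal.ofReal_toReal hωfin).symm
        have hVE : (volume E).toReal = R ^ n * W := by
          rw [← hRE, vol_ball_eq n hn hR, ENNReal.toReal_mul,
            ENNReal.toReal_ofReal (pow_nonneg hR n)]
        have h2' : (0:ℝ) < t0 ^ (-((n:ℝ)/β) + 1) := Real.rpow_pos_of_pos ht0pos _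
        have h3' : -((n:ℝ)/β) + 1 < 0 := by linarith
        have hdivnn : (0:ℝ) ≤ -t0 ^ (-((n:ℝ)/β) + 1) / (-((n:ℝ)/β) + 1) :=
          le_of_lt (div_pos_of_neg_of_neg (by linarith) h3')
        rw [hVE, hωW, ← ENNReal.ofReal_mul (by positivity),
          ← ENNReal.ofReal_mul (by positivity),
          ← ENNReal.ofReal_mul hdivnn,
          ← ENNReal.ofReal_add (by positivity) (mul_nonneg hdivnn hWpos.le)]
        · congr 1
          -- pure real identity
          have hg2 : t0 ^ (-((n:ℝ)/β) + 1) = R ^ ((n:ℝ) - β) := by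
            rw [ht0, ← Real.rpow_mul hR]
            congr 1
            field_simp
            ring
          have hg1 : R ^ ((n:ℝ)) * t0 = R ^ ((n:ℝ) - β) := by
            rw [ht0, ← Real.rpow_add hRpos, sub_eq_add_neg]
          have hg4 : W ^ (β/(n:ℝ)) * W ^ (((n:ℝ) - β)/(n:ℝ)) = W := by
            rw [← Real.rpow_add hWpos, show β/(n:ℝ) + ((n:ℝ) - β)/(n:ℝ) = 1 by
              field_simp; ring, Real.rpow_one]
          have hg3 : (R ^ n * W) ^ (((n:ℝ) - β)/(n:ℝ))
              = R ^ ((n:ℝ) - β) * W ^ (((n:ℝ) - β)/(n:ℝ)) := by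
            rw [Real.mul_rpow (pow_nonneg hR n) hWpos.le, ← Real.rpow_natCast R n,
              ← Real.rpow_mul hR]
            congr 2
            field_simp
          rw [hg2, hg3, ← Real.rpow_natCast R n]
          have := alg_aux (A := R ^ ((n:ℝ))) (B := R ^ ((n:ℝ) - β)) (t := t0) (W := W)
            (W1 := W ^ (β/(n:ℝ))) (W2 := W ^ (((n:ℝ) - β)/(n:ℝ))) hβpos hβn hg1 hg4
          linear_combination this
end

section
/- Let n ≥ 1 be an integer, s ∈ (0,1), and p ≥ 1 with sp < n. Then there exists a constant C depending only on n, s, and p such that for every u ∈ W^{s,p}(ℝ^n): ∫_{ℝ^n} |x|^{−sp} |u(x)|^p dx ≤ C ∫_{ℝ^n} ∫_{ℝ^n} |u(x)−u(y)|^p / |x−y|^{n+sp} dx dy. (Fractional Hardy inequality in ℝ^n.) -/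
open MeasureTheory Metric Set
open scoped ENNReal NNReal

private lemma rpow_ne_top' {a : ℝ≥0∞} (h0 : a ≠ 0) (hT : a ≠ ⊤) (r : ℝ) : a ^ r ≠ ⊤ := by
  simp [ENNReal.rpow_eq_top_iff, h0, hT]

private lemma rpow_ne_zero' {a : ℝ≥0∞} (h0 : a ≠ 0) (hT : a ≠ ⊤) (r : ℝ) : a ^ r ≠ 0 := by
  simp [ENNReal.rpow_eq_zero_iff, h0, hT]

private lemma rpow_anti {a b : ℝ≥0∞} (h : a ≤ b) {r : ℝ} (hr : 0 ≤ r) : b ^ (-r) ≤ a ^ (-r) := by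
  rw [ENNReal.rpow_neg, ENNReal.rpow_neg]
  exact ENNReal.inv_le_inv' (ENNReal.rpow_le_rpow h hr)

private lemma two_rpow_ofReal (r : ℝ) : (2:ℝ≥0∞) ^ r = ENNReal.ofReal (2 ^ r) := by
  rw [show ((2:ℝ≥0∞)) = ENNReal.ofReal 2 by norm_num,
    ENNReal.ofReal_rpow_of_pos two_pos]

set_option maxHeartbeats 2000000 in
theorem hardy_aux (n : ℕ) (hn : 1 ≤ n) (s p : ℝ) (hs : s ∈ Set.Ioo (0:ℝ) 1) (hp : 1 ≤ p)
    (hsp : s * p < n) :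
    ∃ C : ℝ≥0, ∀ u : EuclideanSpace ℝ (Fin n) → ℝ, Measurable u →
      (∫⁻ x, (‖u x‖₊ : ℝ≥0∞) ^ p ∂(volume : Measure (EuclideanSpace ℝ (Fin n)))) < ⊤ →
      (∫⁻ x, (‖x‖₊ : ℝ≥0∞) ^ (-(s*p)) * (‖u x‖₊ : ℝ≥0∞) ^ p
          ∂(volume : Measure (EuclideanSpace ℝ (Fin n))))
        ≤ (C : ℝ≥0∞) *
          ∫⁻ x, ∫⁻ y, (‖u x - u y‖₊ : ℝ≥0∞) ^ p / (‖x - y‖₊ : ℝ≥0∞) ^ ((n:ℝ) + s*p)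
            ∂(volume : Measure (EuclideanSpace ℝ (Fin n))) ∂volume := by
  classical
  haveI : Nonempty (Fin n) := ⟨⟨0, hn⟩⟩
  obtain ⟨hs0, hs1⟩ := hs
  have hp0 : (0:ℝ) < p := lt_of_lt_of_le one_pos hp
  have hsp0 : (0:ℝ) < s * p := mul_pos hs0 hp0
  set q : ℝ := (n:ℝ) + s * p with hq
  have hq0 : (0:ℝ) < q := by positivity
  have hns : (0:ℝ) < (n:ℝ) - s * p := sub_pos.2 hsp
  -- the dilation parameter R
  set R : ℝ := 1 + (2 ^ p * 3 ^ q) ^ (1 / ((n:ℝ) - s * p)) with hR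
  have hR1 : 1 ≤ R := le_add_of_nonneg_right (Real.rpow_nonneg (by positivity) _)
  have hR0 : (0:ℝ) < R := lt_of_lt_of_le one_pos hR1
  have hRpow : 2 ^ (p - 1) * 3 ^ q * R ^ (s * p - (n:ℝ)) ≤ 1 / 2 := by
    have hb : (0:ℝ) < 2 ^ p * 3 ^ q := by positivity
    have h2 : ((2 ^ p * 3 ^ q : ℝ) ^ (1/((n:ℝ)-s*p))) ^ ((n:ℝ)-s*p) = 2 ^ p * 3 ^ q := by
      rw [← Real.rpow_mul hb.le, one_div, inv_mul_cancel₀ hns.ne', Real.rpow_one]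
    have h1 : (2 ^ p * 3 ^ q : ℝ) ≤ R ^ ((n:ℝ) - s*p) := by
      calc (2^p*3^q : ℝ) = _ := h2.symm
      _ ≤ R ^ ((n:ℝ)-s*p) := Real.rpow_le_rpow (Real.rpow_nonneg hb.le _)
          (by rw [hR]; linarith [Real.rpow_nonneg hb.le (1/((n:ℝ)-s*p))]) hns.le
    have h3 : R ^ (s*p - (n:ℝ)) ≤ (2^p*3^q : ℝ)⁻¹ := by
      rw [show s*p - (n:ℝ) = -((n:ℝ)-s*p) by ring, Real.rpow_neg hR0.le]
      exact inv_anti₀ hb h1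
    have h4 : (2:ℝ)^(p-1) = 2^p / 2 := by rw [Real.rpow_sub two_pos, Real.rpow_one]
    calc 2^(p-1) * 3^q * R^(s*p-(n:ℝ)) ≤ 2^(p-1)*3^q * (2^p*3^q)⁻¹ :=
        mul_le_mul_of_nonneg_left h3 (by positivity)
      _ = 1/2 := by rw [h4]; field_simp
  -- basic volume constants
  set v : ℝ≥0∞ := volume (ball (0 : EuclideanSpace ℝ (Fin n)) 1) with hv
  have hv0 : v ≠ 0 := (measure_ball_pos _ _ one_pos).ne'
  have hvT : v ≠ ⊤ := measure_ball_lt_top.ne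
  -- the real constants
  set c1 : ℝ := 2 ^ (p - 1) * (3 * R) ^ q / R ^ (n:ℝ) with hc1
  set c2 : ℝ := 2 ^ (p - 1) / R ^ (n:ℝ) with hc2
  set c3 : ℝ := (3 * R) ^ q / R ^ (n:ℝ) with hc3
  have hc10 : 0 < c1 := by positivity
  have hc20 : 0 < c2 := by positivity
  have hc30 : 0 < c3 := by positivity
  set K : ℝ≥0∞ := ENNReal.ofReal c1 * v⁻¹ with hK
  have hKT : K ≠ ⊤ := ENNReal.mul_ne_top ENNReal.ofReal_ne_top (ENNReal.inv_ne_top.2 hv0)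
  refine ⟨(2 * K).toNNReal, ?_⟩
  intro u hu hLp
  -- abbreviations
  set J : ℝ≥0∞ := ∫⁻ x, ∫⁻ y, (‖u x - u y‖₊ : ℝ≥0∞) ^ p / (‖x - y‖₊ : ℝ≥0∞) ^ q
      ∂(volume : Measure (EuclideanSpace ℝ (Fin n))) ∂volume with hJ
  set F : EuclideanSpace ℝ (Fin n) → EuclideanSpace ℝ (Fin n) → ℝ≥0∞ :=
    fun x y => (‖u x - u y‖₊ : ℝ≥0∞) ^ p / (‖x - y‖₊ : ℝ≥0∞) ^ q with hF
  have hFm : Measurable (Function.uncurry F) := by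
    apply Measurable.div
    · exact ((hu.comp measurable_fst).sub
        (hu.comp measurable_snd)).nnnorm.coe_nnreal_ennreal.pow_const _
    · exact (measurable_fst.sub measurable_snd).nnnorm.coe_nnreal_ennreal.pow_const _
  have hJXm : Measurable fun x => ∫⁻ y, F x y ∂volume := hFm.lintegral_prod_right
  have hJF : J = ∫⁻ x, ∫⁻ y, F x y ∂volume ∂volume := rfl
  set g : EuclideanSpace ℝ (Fin n) → ℝ≥0∞ :=
    fun x => ENNReal.ofReal ‖x‖ ^ (-(s*p)) * (‖u x‖₊ : ℝ≥0∞) ^ p with hg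
  have hgm : Measurable g :=
    (measurable_norm.ennreal_ofReal.pow_const _).mul (hu.nnnorm.coe_nnreal_ennreal.pow_const _)
  have hgoal : (∫⁻ x, (‖x‖₊ : ℝ≥0∞) ^ (-(s*p)) * (‖u x‖₊ : ℝ≥0∞) ^ p
      ∂(volume : Measure (EuclideanSpace ℝ (Fin n)))) = ∫⁻ x, g x ∂volume := by
    refine lintegral_congr fun x => ?_
    rw [hg, ← enorm_eq_nnnorm, ← ofReal_norm]
  -- the annulus-like ball
  set W : EuclideanSpace ℝ (Fin n) → Set (EuclideanSpace ℝ (Fin n)) :=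
    fun x => ball ((2*R) • x) (R * ‖x‖) with hW
  have hWm : ∀ x, MeasurableSet (W x) := fun x => measurableSet_ball
  have hWgeom : ∀ x y : EuclideanSpace ℝ (Fin n), y ∈ W x →
      R * ‖x‖ ≤ ‖y‖ ∧ ‖y‖ ≤ 3*R*‖x‖ ∧ ‖x - y‖ ≤ 3*R*‖x‖ := by
    intro x y hy
    rw [hW, mem_ball, dist_eq_norm] at hy
    have hnx : ‖(2*R) • x‖ = 2*R*‖x‖ := by
      rw [norm_smul, Real.norm_eq_abs, abs_of_pos (by positivity)]
    have habs := abs_norm_sub_norm_le y ((2*R) • x)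
    rw [abs_le, hnx] at habs
    have hx1 : ‖x - (2*R) • x‖ = (2*R - 1) * ‖x‖ := by
      rw [show x - (2*R) • x = (1 - 2*R) • x by rw [sub_smul, one_smul],
        norm_smul, Real.norm_eq_abs, abs_of_nonpos (by linarith)]
      ring
    have hx2 : ‖x - y‖ ≤ ‖x - (2*R) • x‖ + ‖(2*R) • x - y‖ := norm_sub_le_norm_sub_add_norm_sub _ _ _
    rw [norm_sub_rev ((2*R) • x) y] at hx2
    have hn0 : (0:ℝ) ≤ ‖x‖ := norm_nonneg x
    refine ⟨by linarith, by linarith, by rw [hx1] at hx2; linarith⟩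
  have hWvol : ∀ x : EuclideanSpace ℝ (Fin n),
      volume (W x) = ENNReal.ofReal ((R*‖x‖)^n) * v := by
    intro x
    rw [hW]
    rw [Measure.addHaar_ball _ _ (by positivity), finrank_euclideanSpace, Fintype.card_fin]
  -- pointwise estimate
  have hpoint : ∀ x : EuclideanSpace ℝ (Fin n), x ≠ 0 →
      g x ≤ K * (∫⁻ y, F x y ∂volume)
        + ENNReal.ofReal c2 * v⁻¹ * (ENNReal.ofReal ‖x‖ ^ (-q)
            * ∫⁻ y in W x, (‖u y‖₊ : ℝ≥0∞) ^ p ∂volume) := by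
    intro x hx
    have ht : (0:ℝ) < ‖x‖ := norm_pos_iff.2 hx
    have hvolW := hWvol x
    have hRt0 : (0:ℝ) < (R*‖x‖)^n := by positivity
    have hW0 : volume (W x) ≠ 0 := by
      rw [hvolW]
      exact mul_ne_zero (by simp [ENNReal.ofReal_eq_zero, not_le, hRt0]) hv0
    have hWT : volume (W x) ≠ ⊤ := by
      rw [hvolW]; exact ENNReal.mul_ne_top ENNReal.ofReal_ne_top hvT
    have h2T : ((2:ℝ≥0∞)^(p-1)) ≠ ⊤ := rpow_ne_top' two_ne_zero ENNReal.ofNat_ne_top _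
    -- core averaged estimate
    have hcore : volume (W x) * (‖u x‖₊ : ℝ≥0∞)^p
        ≤ (2:ℝ≥0∞)^(p-1) * ((∫⁻ y in W x, (‖u x - u y‖₊ : ℝ≥0∞)^p ∂volume)
            + ∫⁻ y in W x, (‖u y‖₊ : ℝ≥0∞)^p ∂volume) := by
      have h1 : volume (W x) * (‖u x‖₊ : ℝ≥0∞)^p
          = ∫⁻ _ in W x, (‖u x‖₊ : ℝ≥0∞)^p ∂volume := by
        rw [setLIntegral_const, mul_comm]
      rw [h1]
      have h2 : ∀ y : EuclideanSpace ℝ (Fin n), (‖u x‖₊ : ℝ≥0∞)^p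
          ≤ (2:ℝ≥0∞)^(p-1) * ((‖u x - u y‖₊ : ℝ≥0∞)^p + (‖u y‖₊ : ℝ≥0∞)^p) := by
        intro y
        refine le_trans ?_ (ENNReal.rpow_add_le_mul_rpow_add_rpow _ _ hp)
        refine ENNReal.rpow_le_rpow ?_ hp0.le
        have h3 : ‖u x‖₊ ≤ ‖u x - u y‖₊ + ‖u y‖₊ := by
          simpa using nnnorm_add_le (u x - u y) (u y)
        exact_mod_cast h3
      calc (∫⁻ _ in W x, (‖u x‖₊ : ℝ≥0∞)^p ∂volume)
          ≤ ∫⁻ y in W x, (2:ℝ≥0∞)^(p-1) * ((‖u x - u y‖₊ : ℝ≥0∞)^p + (‖u y‖₊ : ℝ≥0∞)^p)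
            ∂volume := lintegral_mono fun y => h2 y
        _ = _ := by
            rw [lintegral_const_mul' _ _ h2T,
              lintegral_add_left ((hu.const_sub (u x)).nnnorm.coe_nnreal_ennreal.pow_const _)]
    -- divide by the volume
    have hinv : (‖u x‖₊ : ℝ≥0∞)^p
        ≤ (volume (W x))⁻¹ * ((2:ℝ≥0∞)^(p-1)
            * ((∫⁻ y in W x, (‖u x - u y‖₊ : ℝ≥0∞)^p ∂volume)
            + ∫⁻ y in W x, (‖u y‖₊ : ℝ≥0∞)^p ∂volume)) := by
      have h5 := mul_le_mul_right hcore (volume (W x))⁻¹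
      rwa [← mul_assoc, ENNReal.inv_mul_cancel hW0 hWT, one_mul] at h5
    -- bound the difference term
    have hD : (∫⁻ y in W x, (‖u x - u y‖₊ : ℝ≥0∞)^p ∂volume)
        ≤ ENNReal.ofReal ((3*R*‖x‖)^q) * ∫⁻ y, F x y ∂volume := by
      have hb : ∀ y ∈ W x, (‖u x - u y‖₊ : ℝ≥0∞)^p
          ≤ ENNReal.ofReal ((3*R*‖x‖)^q) * F x y := by
        intro y hy
        by_cases hxy : x = y
        · subst hxy; simp [ENNReal.zero_rpow_of_pos hp0]
        · have hne : (‖x - y‖₊ : ℝ≥0∞) ≠ 0 := by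
            simp [nnnorm_eq_zero, sub_eq_zero, hxy]
          have hneT : (‖x - y‖₊ : ℝ≥0∞) ≠ ⊤ := ENNReal.coe_ne_top
          have h1 : (‖u x - u y‖₊ : ℝ≥0∞)^p = F x y * ((‖x - y‖₊ : ℝ≥0∞)^q) := by
            rw [hF]
            rw [ENNReal.div_mul_cancel (rpow_ne_zero' hne hneT q) (rpow_ne_top' hne hneT q)]
          rw [h1, mul_comm]
          refine mul_le_mul_left ?_ _
          have h2 : (‖x - y‖₊ : ℝ≥0∞) ≤ ENNReal.ofReal (3*R*‖x‖) := by
            rw [← enorm_eq_nnnorm, ← ofReal_norm]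
            exact ENNReal.ofReal_le_ofReal (hWgeom x y hy).2.2
          calc (‖x - y‖₊ : ℝ≥0∞)^q ≤ (ENNReal.ofReal (3*R*‖x‖))^q :=
              ENNReal.rpow_le_rpow h2 hq0.le
            _ = ENNReal.ofReal ((3*R*‖x‖)^q) := ENNReal.ofReal_rpow_of_pos (by positivity)
      calc (∫⁻ y in W x, (‖u x - u y‖₊ : ℝ≥0∞)^p ∂volume)
          ≤ ∫⁻ y in W x, ENNReal.ofReal ((3*R*‖x‖)^q) * F x y ∂volume :=
            setLIntegral_mono_ae' (hWm x) (ae_of_all _ hb)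
        _ = ENNReal.ofReal ((3*R*‖x‖)^q) * ∫⁻ y in W x, F x y ∂volume :=
            lintegral_const_mul' _ _ ENNReal.ofReal_ne_top
        _ ≤ _ := mul_le_mul_right (setLIntegral_le_lintegral _ _) _
    -- put things together
    have step : g x ≤ ENNReal.ofReal ‖x‖ ^ (-(s*p)) *
        ((ENNReal.ofReal ((R*‖x‖)^n) * v)⁻¹ * ((2:ℝ≥0∞)^(p-1) *
          (ENNReal.ofReal ((3*R*‖x‖)^q) * (∫⁻ y, F x y ∂volume)
            + ∫⁻ y in W x, (‖u y‖₊ : ℝ≥0∞)^p ∂volume))) := by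
      simp only [hg]
      refine mul_le_mul_right ?_ _
      rw [← hvolW]
      refine le_trans hinv (mul_le_mul_right (mul_le_mul_right (add_le_add_left hD _) _) _)
    refine le_trans step (le_of_eq ?_)
    set JX := ∫⁻ y, F x y ∂volume with hJX
    set E := ∫⁻ y in W x, (‖u y‖₊ : ℝ≥0∞)^p ∂volume with hE
    have hsplit : (ENNReal.ofReal ((R*‖x‖)^n) * v)⁻¹
        = (ENNReal.ofReal ((R*‖x‖)^n))⁻¹ * v⁻¹ :=
      ENNReal.mul_inv (Or.inr hvT) (Or.inl ENNReal.ofReal_ne_top)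
    have coefA : ENNReal.ofReal ‖x‖ ^ (-(s*p)) * (ENNReal.ofReal ((R*‖x‖)^n))⁻¹
        * (2:ℝ≥0∞)^(p-1) * ENNReal.ofReal ((3*R*‖x‖)^q) = ENNReal.ofReal c1 := by
      rw [ENNReal.ofReal_rpow_of_pos ht, ← ENNReal.ofReal_inv_of_pos hRt0, two_rpow_ofReal,
        ← ENNReal.ofReal_mul (by positivity), ← ENNReal.ofReal_mul (by positivity),
        ← ENNReal.ofReal_mul (by positivity)]
      congr 1
      have e1 : ((R*‖x‖)^n : ℝ) = R^((n:ℝ)) * ‖x‖^((n:ℝ)) := by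
        rw [← Real.rpow_natCast (R*‖x‖) n, Real.mul_rpow hR0.le ht.le]
      have e2 : ((3*R*‖x‖):ℝ)^q = (3*R)^q * ‖x‖^q := Real.mul_rpow (by positivity) ht.le
      have e3 : ‖x‖^(-(s*p)) * (‖x‖^((n:ℝ)))⁻¹ * ‖x‖^q = 1 := by
        rw [← Real.rpow_neg ht.le, ← Real.rpow_add ht, ← Real.rpow_add ht,
          show -(s*p) + -(n:ℝ) + q = 0 by rw [hq]; ring, Real.rpow_zero]
      calc ‖x‖^(-(s*p)) * (((R*‖x‖)^n : ℝ))⁻¹ * 2^(p-1) * (3*R*‖x‖)^q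
          = (‖x‖^(-(s*p)) * (‖x‖^((n:ℝ)))⁻¹ * ‖x‖^q)
              * ((R^((n:ℝ)))⁻¹ * 2^(p-1) * (3*R)^q) := by
            rw [e1, e2, mul_inv]; ring
        _ = c1 := by rw [e3, hc1, one_mul]; field_simp
    have coefB : ENNReal.ofReal ‖x‖ ^ (-(s*p)) * (ENNReal.ofReal ((R*‖x‖)^n))⁻¹
        * (2:ℝ≥0∞)^(p-1) = ENNReal.ofReal c2 * ENNReal.ofReal ‖x‖ ^ (-q) := by
      rw [ENNReal.ofReal_rpow_of_pos ht, ENNReal.ofReal_rpow_of_pos ht,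
        ← ENNReal.ofReal_inv_of_pos hRt0, two_rpow_ofReal,
        ← ENNReal.ofReal_mul (by positivity), ← ENNReal.ofReal_mul (by positivity),
        ← ENNReal.ofReal_mul hc20.le]
      congr 1
      have e1 : ((R*‖x‖)^n : ℝ) = R^((n:ℝ)) * ‖x‖^((n:ℝ)) := by
        rw [← Real.rpow_natCast (R*‖x‖) n, Real.mul_rpow hR0.le ht.le]
      have e4 : ‖x‖^(-(s*p)) * (‖x‖^((n:ℝ)))⁻¹ = ‖x‖^(-q) := by
        rw [← Real.rpow_neg ht.le, ← Real.rpow_add ht,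
          show -(s*p) + -(n:ℝ) = -q by rw [hq]; ring]
      calc ‖x‖^(-(s*p)) * (((R*‖x‖)^n : ℝ))⁻¹ * 2^(p-1)
          = (‖x‖^(-(s*p)) * (‖x‖^((n:ℝ)))⁻¹) * ((R^((n:ℝ)))⁻¹ * 2^(p-1)) := by
            rw [e1, mul_inv]; ring
        _ = c2 * ‖x‖^(-q) := by rw [e4, hc2]; field_simp
    calc ENNReal.ofReal ‖x‖ ^ (-(s*p)) * ((ENNReal.ofReal ((R*‖x‖)^n) * v)⁻¹
          * ((2:ℝ≥0∞)^(p-1) * (ENNReal.ofReal ((3*R*‖x‖)^q) * JX + E)))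
        = (ENNReal.ofReal ‖x‖ ^ (-(s*p)) * (ENNReal.ofReal ((R*‖x‖)^n))⁻¹ * (2:ℝ≥0∞)^(p-1)
            * ENNReal.ofReal ((3*R*‖x‖)^q)) * v⁻¹ * JX
          + (ENNReal.ofReal ‖x‖ ^ (-(s*p)) * (ENNReal.ofReal ((R*‖x‖)^n))⁻¹
            * (2:ℝ≥0∞)^(p-1)) * v⁻¹ * E := by rw [hsplit]; ring
      _ = K * JX + ENNReal.ofReal c2 * v⁻¹ * (ENNReal.ofReal ‖x‖ ^ (-q) * E) := by
          rw [coefA, coefB, hK]; ring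
  -- main estimate on the truncated integral
  have hmain : ∀ ε : ℝ, 0 < ε →
      (∫⁻ x in {z : EuclideanSpace ℝ (Fin n) | ε ≤ ‖z‖}, g x ∂volume) ≤ 2 * K * J := by
    intro ε hε
    set S : Set (EuclideanSpace ℝ (Fin n)) := {z | ε ≤ ‖z‖} with hS
    have hSm : MeasurableSet S := measurableSet_le measurable_const measurable_norm
    have hc2T : ENNReal.ofReal c2 * v⁻¹ ≠ ⊤ :=
      ENNReal.mul_ne_top ENNReal.ofReal_ne_top (ENNReal.inv_ne_top.2 hv0)
    set Iε := ∫⁻ x in S, g x ∂volume with hIe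
    set Tε := ∫⁻ x in S, ENNReal.ofReal ‖x‖ ^ (-q)
        * ∫⁻ y in W x, (‖u y‖₊ : ℝ≥0∞)^p ∂volume ∂volume with hTe
    -- first inequality
    have step1 : Iε ≤ K * J + ENNReal.ofReal c2 * v⁻¹ * Tε := by
      have h1 : Iε ≤ ∫⁻ x in S, (K * (∫⁻ y, F x y ∂volume)
          + ENNReal.ofReal c2 * v⁻¹ * (ENNReal.ofReal ‖x‖ ^ (-q)
            * ∫⁻ y in W x, (‖u y‖₊ : ℝ≥0∞)^p ∂volume)) ∂volume := by
        refine setLIntegral_mono_ae' hSm (ae_of_all _ fun x hx => ?_)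
        refine hpoint x ?_
        intro h0
        have hx2 : ε ≤ ‖x‖ := hx
        rw [h0, norm_zero] at hx2
        linarith
      refine le_trans h1 ?_
      rw [lintegral_add_left (hJXm.const_mul K)]
      refine add_le_add ?_ ?_
      · rw [lintegral_const_mul' _ _ hKT]
        exact mul_le_mul_right (le_trans (setLIntegral_le_lintegral _ _)
          (le_of_eq hJF.symm)) _
      · rw [lintegral_const_mul' _ _ hc2T]
    -- Fubini bound
    have hTb : Tε ≤ ENNReal.ofReal c3 * v * Iε := by
      set H : EuclideanSpace ℝ (Fin n) → EuclideanSpace ℝ (Fin n) → ℝ≥0∞ :=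
        fun x y => if ε ≤ ‖x‖ ∧ y ∈ W x then ENNReal.ofReal ‖x‖ ^ (-q) * (‖u y‖₊ : ℝ≥0∞)^p
          else 0 with hH
      have hHm : Measurable (Function.uncurry H) := by
        have hset : MeasurableSet {z : EuclideanSpace ℝ (Fin n) × EuclideanSpace ℝ (Fin n) |
            ε ≤ ‖z.1‖ ∧ z.2 ∈ W z.1} := by
          have heq : {z : EuclideanSpace ℝ (Fin n) × EuclideanSpace ℝ (Fin n) |
              ε ≤ ‖z.1‖ ∧ z.2 ∈ W z.1}
              = {z : EuclideanSpace ℝ (Fin n) × EuclideanSpace ℝ (Fin n) | ε ≤ ‖z.1‖}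
                ∩ {z : EuclideanSpace ℝ (Fin n) × EuclideanSpace ℝ (Fin n) |
                    ‖z.2 - (2*R) • z.1‖ < R * ‖z.1‖} := by
            ext z
            simp [hW, mem_ball, dist_eq_norm]
          rw [heq]
          exact (measurableSet_le measurable_const (measurable_norm.comp measurable_fst)).inter
            (measurableSet_lt ((measurable_snd.sub (measurable_fst.const_smul (2*R))).norm)
              ((measurable_norm.comp measurable_fst).const_mul R))
        have hfun : Measurable fun z : EuclideanSpace ℝ (Fin n) × EuclideanSpace ℝ (Fin n) =>
            ENNReal.ofReal ‖z.1‖ ^ (-q) * (‖u z.2‖₊ : ℝ≥0∞)^p :=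
          (((measurable_norm.comp measurable_fst).ennreal_ofReal).pow_const _).mul
            ((hu.comp measurable_snd).nnnorm.coe_nnreal_ennreal.pow_const _)
        exact Measurable.ite hset hfun measurable_const
      have hTH : Tε = ∫⁻ x, ∫⁻ y, H x y ∂volume ∂volume := by
        rw [hTe, ← lintegral_indicator hSm]
        refine lintegral_congr fun x => ?_
        by_cases hx : x ∈ S
        · rw [indicator_of_mem hx]
          have hx' : ε ≤ ‖x‖ := hx
          have hxn : (0:ℝ) < ‖x‖ := lt_of_lt_of_le hε hx'
          have hfin : ENNReal.ofReal ‖x‖ ^ (-q) ≠ ⊤ :=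
            rpow_ne_top' (ENNReal.ofReal_pos.2 hxn).ne' ENNReal.ofReal_ne_top _
          rw [← lintegral_const_mul' _ _ hfin, ← lintegral_indicator (hWm x)]
          refine lintegral_congr fun y => ?_
          by_cases hy : y ∈ W x
          · rw [indicator_of_mem hy]
            simp only [hH]
            rw [if_pos ⟨hx', hy⟩]
          · rw [indicator_of_notMem hy]
            simp only [hH]
            rw [if_neg fun hc => hy hc.2]
        · rw [indicator_of_notMem hx]
          symm
          have hz : ∀ y, H x y = 0 := by
            intro y
            simp only [hH]
            rw [if_neg fun hc => hx hc.1]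
          simp [hz]
      have hswap : (∫⁻ x, ∫⁻ y, H x y ∂volume ∂volume)
          = ∫⁻ y, ∫⁻ x, H x y ∂volume ∂volume :=
        lintegral_lintegral_swap hHm.aemeasurable
      set S' : Set (EuclideanSpace ℝ (Fin n)) := {z | R*ε ≤ ‖z‖} with hS'
      have hS'm : MeasurableSet S' := measurableSet_le measurable_const measurable_norm
      have hinner : ∀ y, (∫⁻ x, H x y ∂volume)
          ≤ S'.indicator (fun z => ENNReal.ofReal c3 * v * g z) y := by
        intro y
        by_cases hy : y ∈ S'
        · rw [indicator_of_mem hy]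
          have hy' : R*ε ≤ ‖y‖ := hy
          have hy0 : (0:ℝ) < ‖y‖ := lt_of_lt_of_le (by positivity) hy'
          have hb1 : ∀ x, H x y ≤ (closedBall (0:EuclideanSpace ℝ (Fin n)) (‖y‖/R)).indicator
              (fun _ => ENNReal.ofReal (‖y‖/(3*R)) ^ (-q) * (‖u y‖₊ : ℝ≥0∞)^p) x := by
            intro x
            simp only [hH]
            split_ifs with hcond
            · obtain ⟨hx1, hx2⟩ := hcond
              obtain ⟨hg1, hg2, -⟩ := hWgeom x y hx2
              have hmem : x ∈ closedBall (0:EuclideanSpace ℝ (Fin n)) (‖y‖/R) := by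
                rw [mem_closedBall, dist_zero_right, le_div_iff₀ hR0]
                linarith
              rw [indicator_of_mem hmem]
              refine mul_le_mul_left ?_ _
              refine rpow_anti (ENNReal.ofReal_le_ofReal ?_) hq0.le
              rw [div_le_iff₀ (by positivity)]
              linarith
            · exact zero_le
          have coefY : ENNReal.ofReal (‖y‖/(3*R)) ^ (-q) * ENNReal.ofReal ((‖y‖/R)^n)
              = ENNReal.ofReal c3 * ENNReal.ofReal ‖y‖ ^ (-(s*p)) := by
            rw [ENNReal.ofReal_rpow_of_pos (by positivity), ENNReal.ofReal_rpow_of_pos hy0,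
              ← ENNReal.ofReal_mul (by positivity), ← ENNReal.ofReal_mul hc30.le]
            congr 1
            have e1 : ((‖y‖/R)^n : ℝ) = ‖y‖^((n:ℝ)) * (R^((n:ℝ)))⁻¹ := by
              rw [← Real.rpow_natCast (‖y‖/R) n, Real.div_rpow hy0.le hR0.le, div_eq_mul_inv]
            have e2 : (‖y‖/(3*R))^(-q) = ‖y‖^(-q) * (((3*R):ℝ)^(-q))⁻¹ := by
              rw [Real.div_rpow hy0.le (by positivity), div_eq_mul_inv]
            have e3 : ‖y‖^(-q) * ‖y‖^((n:ℝ)) = ‖y‖^(-(s*p)) := by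
              rw [← Real.rpow_add hy0, show -q + (n:ℝ) = -(s*p) by rw [hq]; ring]
            have e4 : ((((3*R):ℝ))^(-q))⁻¹ = ((3*R):ℝ)^q := by
              rw [Real.rpow_neg (by positivity), inv_inv]
            calc (‖y‖/(3*R))^(-q) * ((‖y‖/R)^n : ℝ)
                = (‖y‖^(-q) * ‖y‖^((n:ℝ))) * ((((3*R):ℝ)^(-q))⁻¹ * (R^((n:ℝ)))⁻¹) := by
                  rw [e1, e2]; ring
              _ = c3 * ‖y‖^(-(s*p)) := by rw [e3, e4, hc3]; field_simp
          calc (∫⁻ x, H x y ∂volume)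
              ≤ ∫⁻ x, (closedBall (0:EuclideanSpace ℝ (Fin n)) (‖y‖/R)).indicator
                  (fun _ => ENNReal.ofReal (‖y‖/(3*R)) ^ (-q) * (‖u y‖₊ : ℝ≥0∞)^p) x ∂volume :=
                lintegral_mono hb1
            _ = ENNReal.ofReal (‖y‖/(3*R)) ^ (-q) * (‖u y‖₊ : ℝ≥0∞)^p
                * volume (closedBall (0:EuclideanSpace ℝ (Fin n)) (‖y‖/R)) := by
                rw [lintegral_indicator measurableSet_closedBall, setLIntegral_const]
            _ = ENNReal.ofReal c3 * v * g y := by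
                rw [Measure.addHaar_closedBall _ _ (by positivity), finrank_euclideanSpace,
                  Fintype.card_fin]
                simp only [hg]
                calc ENNReal.ofReal (‖y‖/(3*R)) ^ (-q) * (‖u y‖₊ : ℝ≥0∞)^p
                    * (ENNReal.ofReal ((‖y‖/R)^n) * v)
                    = (ENNReal.ofReal (‖y‖/(3*R)) ^ (-q) * ENNReal.ofReal ((‖y‖/R)^n)) * v
                        * (‖u y‖₊ : ℝ≥0∞)^p := by ring
                  _ = (ENNReal.ofReal c3 * ENNReal.ofReal ‖y‖ ^ (-(s*p))) * v
                        * (‖u y‖₊ : ℝ≥0∞)^p := by rw [coefY]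
                  _ = ENNReal.ofReal c3 * v * (ENNReal.ofReal ‖y‖ ^ (-(s*p))
                        * (‖u y‖₊ : ℝ≥0∞)^p) := by ring
        · rw [indicator_of_notMem hy]
          have hz : ∀ x, H x y = 0 := by
            intro x
            simp only [hH]
            rw [if_neg]
            rintro ⟨hx1, hx2⟩
            refine hy ?_
            have h1 := (hWgeom x y hx2).1
            have h2 : R*ε ≤ R*‖x‖ := mul_le_mul_of_nonneg_left hx1 hR0.le
            exact le_trans h2 h1
          simp [hz]
      calc Tε = ∫⁻ y, ∫⁻ x, H x y ∂volume ∂volume := by rw [hTH, hswap]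
        _ ≤ ∫⁻ y, S'.indicator (fun z => ENNReal.ofReal c3 * v * g z) y ∂volume :=
            lintegral_mono hinner
        _ = ∫⁻ y in S', ENNReal.ofReal c3 * v * g y ∂volume := lintegral_indicator hS'm _
        _ = ENNReal.ofReal c3 * v * ∫⁻ y in S', g y ∂volume :=
            lintegral_const_mul' _ _ (ENNReal.mul_ne_top ENNReal.ofReal_ne_top hvT)
        _ ≤ ENNReal.ofReal c3 * v * Iε := by
            refine mul_le_mul_right (lintegral_mono_set ?_) _
            intro z hz
            have hz' : R*ε ≤ ‖z‖ := hz
            have h3 : ε ≤ R*ε := le_mul_of_one_le_left hε.le hR1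
            exact le_trans h3 hz'
    -- the absorption constant
    have hθ : ENNReal.ofReal c2 * v⁻¹ * (ENNReal.ofReal c3 * v) ≤ 2⁻¹ := by
      have h1 : ENNReal.ofReal c2 * v⁻¹ * (ENNReal.ofReal c3 * v)
          = ENNReal.ofReal (c2*c3) := by
        rw [ENNReal.ofReal_mul hc20.le]
        calc ENNReal.ofReal c2 * v⁻¹ * (ENNReal.ofReal c3 * v)
            = ENNReal.ofReal c2 * ENNReal.ofReal c3 * (v⁻¹ * v) := by ring
          _ = _ := by rw [ENNReal.inv_mul_cancel hv0 hvT, mul_one]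
      rw [h1]
      have e5 : c2 * c3 = 2^(p-1) * 3^q * R^(s*p - (n:ℝ)) := by
        rw [hc2, hc3]
        have e6 : ((3*R):ℝ)^q = 3^q * R^q := Real.mul_rpow (by norm_num) hR0.le
        have e7 : (R:ℝ)^q * ((R^((n:ℝ)))⁻¹ * (R^((n:ℝ)))⁻¹) = R^(s*p - (n:ℝ)) := by
          rw [← Real.rpow_neg hR0.le, ← Real.rpow_add hR0, ← Real.rpow_add hR0]
          congr 1
          rw [hq]; ring
        calc (2^(p-1) / R^((n:ℝ))) * (((3*R):ℝ)^q / R^((n:ℝ)))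
            = 2^(p-1) * 3^q * ((R:ℝ)^q * ((R^((n:ℝ)))⁻¹ * (R^((n:ℝ)))⁻¹)) := by
              rw [e6]; ring
          _ = _ := by rw [e7]
      have h2 : c2 * c3 ≤ 1/2 := by rw [e5]; exact hRpow
      calc ENNReal.ofReal (c2*c3) ≤ ENNReal.ofReal (1/2) := ENNReal.ofReal_le_ofReal h2
        _ = 2⁻¹ := by
            rw [show (1:ℝ)/2 = (2:ℝ)⁻¹ by norm_num, ENNReal.ofReal_inv_of_pos two_pos]
            norm_num
    -- finiteness of the truncated integral
    have hIfin : Iε ≠ ⊤ := by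
      have hb0 : Iε ≤ ∫⁻ x in S, ENNReal.ofReal (ε^(-(s*p))) * (‖u x‖₊ : ℝ≥0∞)^p ∂volume := by
        refine setLIntegral_mono_ae' hSm (ae_of_all _ fun x hx => ?_)
        simp only [hg]
        refine mul_le_mul_left ?_ _
        have h1 : ENNReal.ofReal ‖x‖ ^ (-(s*p)) ≤ ENNReal.ofReal ε ^ (-(s*p)) :=
          rpow_anti (ENNReal.ofReal_le_ofReal hx) hsp0.le
        rwa [ENNReal.ofReal_rpow_of_pos hε] at h1
      have hb : Iε ≤ ENNReal.ofReal (ε^(-(s*p))) * ∫⁻ x, (‖u x‖₊ : ℝ≥0∞)^p ∂volume := by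
        refine le_trans hb0 ?_
        rw [lintegral_const_mul' _ _ ENNReal.ofReal_ne_top]
        exact mul_le_mul_right (setLIntegral_le_lintegral _ _) _
      exact (lt_of_le_of_lt hb (ENNReal.mul_lt_top ENNReal.ofReal_lt_top hLp)).ne
    -- absorption
    have habs : Iε ≤ K * J + 2⁻¹ * Iε := by
      refine le_trans step1 (add_le_add_right ?_ _)
      calc ENNReal.ofReal c2 * v⁻¹ * Tε
          ≤ ENNReal.ofReal c2 * v⁻¹ * (ENNReal.ofReal c3 * v * Iε) := mul_le_mul_right hTb _
        _ = (ENNReal.ofReal c2 * v⁻¹ * (ENNReal.ofReal c3 * v)) * Iε := by ring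
        _ ≤ 2⁻¹ * Iε := mul_le_mul_left hθ _
    have hhalf : (2:ℝ≥0∞)⁻¹ * Iε ≠ ⊤ := ENNReal.mul_ne_top (by simp) hIfin
    have h6 : (2:ℝ≥0∞)⁻¹ * Iε ≤ K * J := by
      have h7 : (2:ℝ≥0∞)⁻¹ * Iε + 2⁻¹ * Iε ≤ K * J + 2⁻¹ * Iε := by
        refine le_trans (le_of_eq ?_) habs
        rw [← add_mul, ENNReal.inv_two_add_inv_two, one_mul]
      exact (ENNReal.add_le_add_iff_right hhalf).1 h7
    have h8 : (2:ℝ≥0∞) * ((2:ℝ≥0∞)⁻¹ * Iε) = Iε := by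
      rw [← mul_assoc, ENNReal.mul_inv_cancel (by norm_num) (by norm_num), one_mul]
    calc Iε = 2 * ((2:ℝ≥0∞)⁻¹ * Iε) := h8.symm
      _ ≤ 2 * (K*J) := mul_le_mul_right h6 _
      _ = 2*K*J := by rw [← mul_assoc]
  -- conclusion by monotone convergence
  rw [hgoal, ENNReal.coe_toNNReal (ENNReal.mul_ne_top ENNReal.ofNat_ne_top hKT)]
  have hfm : ∀ k : ℕ, Measurable fun x : EuclideanSpace ℝ (Fin n) =>
      ({z : EuclideanSpace ℝ (Fin n) | 1/((k:ℝ)+1) ≤ ‖z‖}).indicator g x :=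
    fun k => hgm.indicator (measurableSet_le measurable_const measurable_norm)
  have hmono : Monotone fun k : ℕ => fun x : EuclideanSpace ℝ (Fin n) =>
      ({z : EuclideanSpace ℝ (Fin n) | 1/((k:ℝ)+1) ≤ ‖z‖}).indicator g x := by
    intro k l hkl
    intro x
    have hsub' : {z : EuclideanSpace ℝ (Fin n) | 1/((k:ℝ)+1) ≤ ‖z‖}
        ⊆ {z : EuclideanSpace ℝ (Fin n) | 1/((l:ℝ)+1) ≤ ‖z‖} := by
      intro z hz
      simp only [Set.mem_setOf_eq] at hz ⊢
      refine le_trans ?_ hz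
      have : (k:ℝ) + 1 ≤ (l:ℝ) + 1 := by exact_mod_cast Nat.succ_le_succ hkl
      exact one_div_le_one_div_of_le (by positivity) this
    exact indicator_le_indicator_of_subset hsub' (fun _ => zero_le) x
  have hae : g =ᵐ[(volume : Measure (EuclideanSpace ℝ (Fin n)))]
      fun x => ⨆ k : ℕ, ({z : EuclideanSpace ℝ (Fin n) | 1/((k:ℝ)+1) ≤ ‖z‖}).indicator g x := by
    have hsub : {x : EuclideanSpace ℝ (Fin n) |
        ¬ (g x = ⨆ k : ℕ, ({z : EuclideanSpace ℝ (Fin n) | 1/((k:ℝ)+1) ≤ ‖z‖}).indicator g x)}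
        ⊆ {0} := by
      intro x hx
      by_contra hx0
      apply hx
      have hx0' : x ≠ 0 := by simpa using hx0
      have hxn : (0:ℝ) < ‖x‖ := norm_pos_iff.2 hx0'
      obtain ⟨k, hk⟩ := exists_nat_one_div_lt hxn
      refine le_antisymm ?_ ?_
      · refine le_trans (le_of_eq ?_) (le_iSup (fun k : ℕ =>
          ({z : EuclideanSpace ℝ (Fin n) | 1/((k:ℝ)+1) ≤ ‖z‖}).indicator g x) k)
        rw [indicator_of_mem (show x ∈ {z : EuclideanSpace ℝ (Fin n) | 1/((k:ℝ)+1) ≤ ‖z‖}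
          from le_of_lt hk) g]
      · exact iSup_le fun k => indicator_le_self' (fun _ _ => zero_le) x
    exact ae_iff.2 (measure_mono_null hsub (measure_singleton _))
  calc ∫⁻ x, g x ∂volume
      = ∫⁻ x, ⨆ k : ℕ, ({z : EuclideanSpace ℝ (Fin n) | 1/((k:ℝ)+1) ≤ ‖z‖}).indicator g x
        ∂volume := lintegral_congr_ae hae
    _ = ⨆ k : ℕ, ∫⁻ x, ({z : EuclideanSpace ℝ (Fin n) | 1/((k:ℝ)+1) ≤ ‖z‖}).indicator g x
        ∂volume := lintegral_iSup hfm hmono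
    _ ≤ 2 * K * J := by
        refine iSup_le fun k => ?_
        rw [lintegral_indicator (measurableSet_le measurable_const measurable_norm)]
        exact hmain (1/((k:ℝ)+1)) (by positivity)

/-- Fractional Hardy inequality in `ℝ^n`: for `s ∈ (0,1)`, `p ≥ 1` with `sp < n`, there is a
constant `C = C(n,s,p)` such that `∫ |x|^{-sp}|u|^p ≤ C [u]_{W^{s,p}(ℝ^n)}^p` for all
`u ∈ W^{s,p}(ℝ^n)`. -/
theorem fractional_hardy_inequality
    (n : ℕ) (hn : 1 ≤ n) (s p : ℝ) (hs : s ∈ Set.Ioo (0:ℝ) 1) (hp : 1 ≤ p)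
    (hsp : s * p < n) :
    ∃ C : ℝ≥0, ∀ u : EuclideanSpace ℝ (Fin n) → ℝ,
      MemLp u (ENNReal.ofReal p) (volume : Measure (EuclideanSpace ℝ (Fin n))) →
      (∫⁻ x, ∫⁻ y, (‖u x - u y‖₊ : ℝ≥0∞) ^ p / (‖x - y‖₊ : ℝ≥0∞) ^ ((n:ℝ) + s*p)
        ∂(volume : Measure (EuclideanSpace ℝ (Fin n))) ∂volume) < ⊤ →
      (∫⁻ x, (‖x‖₊ : ℝ≥0∞) ^ (-(s*p)) * (‖u x‖₊ : ℝ≥0∞) ^ p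
          ∂(volume : Measure (EuclideanSpace ℝ (Fin n))))
        ≤ (C : ℝ≥0∞) *
          ∫⁻ x, ∫⁻ y, (‖u x - u y‖₊ : ℝ≥0∞) ^ p / (‖x - y‖₊ : ℝ≥0∞) ^ ((n:ℝ) + s*p)
            ∂(volume : Measure (EuclideanSpace ℝ (Fin n))) ∂volume := by
  obtain ⟨C, hC⟩ := hardy_aux n hn s p hs hp hsp
  refine ⟨C, fun u hu _ => ?_⟩
  -- replace `u` by a measurable representative
  set w : EuclideanSpace ℝ (Fin n) → ℝ := hu.aestronglyMeasurable.mk u with hw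
  have hwm : Measurable w := hu.aestronglyMeasurable.stronglyMeasurable_mk.measurable
  have huw : u =ᵐ[volume] w := hu.aestronglyMeasurable.ae_eq_mk
  have hLp : (∫⁻ x, (‖w x‖₊ : ℝ≥0∞) ^ p
      ∂(volume : Measure (EuclideanSpace ℝ (Fin n)))) < ⊤ := by
    have hp0 : (0:ℝ) < p := lt_of_lt_of_le one_pos hp
    have h1 : ENNReal.ofReal p ≠ 0 := by simp [ENNReal.ofReal_eq_zero, not_le, hp0]
    have h2 : (ENNReal.ofReal p) ≠ ⊤ := ENNReal.ofReal_ne_top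
    have h3 := hu.2
    rw [eLpNorm_eq_lintegral_rpow_enorm_toReal h1 h2, ENNReal.toReal_ofReal hp0.le] at h3
    have h4 := ENNReal.rpow_lt_top_of_nonneg (le_of_lt hp0) (ne_of_lt h3)
    rw [← ENNReal.rpow_mul, one_div, inv_mul_cancel₀ hp0.ne', ENNReal.rpow_one] at h4
    have h5 : (∫⁻ x, (‖w x‖₊ : ℝ≥0∞) ^ p ∂(volume : Measure (EuclideanSpace ℝ (Fin n))))
        = ∫⁻ x, (‖u x‖₊ : ℝ≥0∞) ^ p ∂volume := by
      refine lintegral_congr_ae ?_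
      filter_upwards [huw] with x hx
      rw [hx]
    rw [h5]
    exact h4
  have h1 : (∫⁻ x, (‖x‖₊ : ℝ≥0∞) ^ (-(s*p)) * (‖u x‖₊ : ℝ≥0∞) ^ p
      ∂(volume : Measure (EuclideanSpace ℝ (Fin n))))
      = ∫⁻ x, (‖x‖₊ : ℝ≥0∞) ^ (-(s*p)) * (‖w x‖₊ : ℝ≥0∞) ^ p ∂volume := by
    refine lintegral_congr_ae ?_
    filter_upwards [huw] with x hx
    rw [hx]
  have h2 : (∫⁻ x, ∫⁻ y, (‖u x - u y‖₊ : ℝ≥0∞) ^ p / (‖x - y‖₊ : ℝ≥0∞) ^ ((n:ℝ) + s*p)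
        ∂(volume : Measure (EuclideanSpace ℝ (Fin n))) ∂volume)
      = ∫⁻ x, ∫⁻ y, (‖w x - w y‖₊ : ℝ≥0∞) ^ p / (‖x - y‖₊ : ℝ≥0∞) ^ ((n:ℝ) + s*p)
        ∂(volume : Measure (EuclideanSpace ℝ (Fin n))) ∂volume := by
    refine lintegral_congr_ae ?_
    filter_upwards [huw] with x hx
    refine lintegral_congr_ae ?_
    filter_upwards [huw] with y hy
    rw [hx, hy]
  rw [h1, h2]
  exact hC w hwm hLp
end
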